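/- arXiv:1205.4368 — 9 statements merged into one kernel-verified Lean document; each statement's English description precedes it below -/
import Mathlib

section
/- Let A be an irreducible tridiagonal matrix of size (d+1)×(d+1) over a field 𝕜. Then for all 0 ≤ i,j ≤ d: (i) the entry (A^r)_{i,j} = 0 whenever 0 ≤ r ≤ d and r < |i−j|; (ii) if i ≤ j then (A^{j−i})_{i,j} = ∏_{h=i}^{j−1} A_{h,h+1}, and in particular (A^{j−i})_{i,j} ≠ 0; (iii) if i ≥ j then (A^{i−j})_{i,j} = ∏_{h=j}^{i−1} A_{h+1,h}, and in particular (A^{i−j})_{i,j} ≠ 0. -/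
/-!
For a tridiagonal `A`, the entry `(A ^ (r + 1)) i j = ∑ₖ (A ^ r) i k * A k j` only sees indices `k`
with `|k - j| ≤ 1`, so by induction on `r` the power `A ^ r` vanishes beyond distance `r`.
At distance exactly `r` the same expansion leaves a single term, the one through the neighbour of
`j` on the side of `i`; this gives the product of the super- (or sub-) diagonal entries, which is
nonzero when `A` is irreducible. The subdiagonal case is the superdiagonal one for `Aᵀ`.
-/

open Fin.NatCast

theorem Fin.abs_natCast_sub_natCast_succ {n : ℕ} [NeZero n] {h : ℕ} (hh : h + 1 < n) :
    |(((h : Fin n) : ℕ) : ℤ) - (((h + 1 : ℕ) : Fin n) : ℕ)| = 1 := by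
  rw [Fin.val_cast_of_lt hh, Fin.val_cast_of_lt (by omega)]
  norm_num

namespace Matrix

variable {R : Type*} {n : ℕ}

def IsTridiagonal [Zero R] (A : Matrix (Fin n) (Fin n) R) : Prop :=
  ∀ i j : Fin n, 1 < |((i : ℕ) : ℤ) - ((j : ℕ) : ℤ)| → A i j = 0

namespace IsTridiagonal

variable {A : Matrix (Fin n) (Fin n) R}

theorem transpose [Zero R] (hA : A.IsTridiagonal) : Aᵀ.IsTridiagonal :=
  fun i j h => hA j i (by rwa [abs_sub_comm])

theorem pow_apply_eq_zero [Semiring R] (hA : A.IsTridiagonal) {r : ℕ} {i j : Fin n}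
    (h : (r : ℤ) < |((i : ℕ) : ℤ) - ((j : ℕ) : ℤ)|) : (A ^ r) i j = 0 := by
  induction r generalizing j with
  | zero => exact one_apply_ne fun hij => by simp [hij] at h
  | succ r ih =>
    rw [pow_succ, mul_apply]
    refine Finset.sum_eq_zero fun k _ => ?_
    rcases lt_or_ge 1 |((k : ℕ) : ℤ) - ((j : ℕ) : ℤ)| with hkj | hkj
    · rw [hA k j hkj, mul_zero]
    · have := abs_sub_le ((i : ℕ) : ℤ) ((k : ℕ) : ℤ) ((j : ℕ) : ℤ)
      rw [ih (by push_cast at h; omega), zero_mul]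

theorem pow_apply_eq_prod_superdiag [CommSemiring R] [NeZero n] (hA : A.IsTridiagonal) {r : ℕ}
    {i j : Fin n} (hij : (j : ℕ) = i + r) :
    (A ^ r) i j = ∏ h ∈ Finset.Ico (i : ℕ) (j : ℕ), A (h : Fin n) ((h + 1 : ℕ) : Fin n) := by
  induction r generalizing j with
  | zero => simp [Fin.ext (hij.trans (add_zero _)).symm]
  | succ r ih =>
    obtain ⟨m, hm⟩ : ∃ m, (j : ℕ) = m + 1 := ⟨j - 1, by omega⟩
    have hmn : m < n := by omega
    have hk : ((m : Fin n) : ℕ) = m := Fin.val_cast_of_lt hmn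
    have hj : ((m + 1 : ℕ) : Fin n) = j := by rw [← hm, Fin.cast_val_eq_self]
    rw [pow_succ, mul_apply, Finset.sum_eq_single (m : Fin n), ih (by omega), hm,
      Finset.prod_Ico_succ_top (by omega), hj, hk]
    · intro k _ hkm
      rcases lt_or_ge 1 |((k : ℕ) : ℤ) - ((j : ℕ) : ℤ)| with hkj | hkj
      · rw [hA k j hkj, mul_zero]
      · have : (k : ℕ) ≠ m := fun h => hkm (Fin.ext (h.trans hk.symm))
        rw [hA.pow_apply_eq_zero (by rw [abs_le] at hkj; rw [lt_abs]; omega), zero_mul]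
    · exact fun h => absurd (Finset.mem_univ _) h

theorem pow_apply_eq_prod_subdiag [CommSemiring R] [NeZero n]
    (hA : A.IsTridiagonal) {r : ℕ} {i j : Fin n} (hij : (i : ℕ) = j + r) :
    (A ^ r) i j = ∏ h ∈ Finset.Ico (j : ℕ) (i : ℕ), A ((h + 1 : ℕ) : Fin n) (h : Fin n) := by
  rw [← transpose_apply (A ^ r), transpose_pow]
  exact hA.transpose.pow_apply_eq_prod_superdiag hij

end IsTridiagonal

variable [CommMonoidWithZero R] [NoZeroDivisors R] [Nontrivial R] [NeZero n]
  {A : Matrix (Fin n) (Fin n) R}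

theorem prod_superdiag_ne_zero
    (hirr : ∀ i j : Fin n, |((i : ℕ) : ℤ) - ((j : ℕ) : ℤ)| = 1 → A i j ≠ 0)
    (i j : Fin n) :
    ∏ h ∈ Finset.Ico (i : ℕ) (j : ℕ), A (h : Fin n) ((h + 1 : ℕ) : Fin n) ≠ 0 :=
  Finset.prod_ne_zero_iff.2 fun h hh =>
    hirr _ _ (Fin.abs_natCast_sub_natCast_succ (by have := j.isLt; simp at hh; omega))

theorem prod_subdiag_ne_zero
    (hirr : ∀ i j : Fin n, |((i : ℕ) : ℤ) - ((j : ℕ) : ℤ)| = 1 → A i j ≠ 0)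
    (i j : Fin n) :
    ∏ h ∈ Finset.Ico (j : ℕ) (i : ℕ), A ((h + 1 : ℕ) : Fin n) (h : Fin n) ≠ 0 :=
  Finset.prod_ne_zero_iff.2 fun h hh => hirr _ _ <| by
    rw [abs_sub_comm, Fin.abs_natCast_sub_natCast_succ (by have := i.isLt; simp at hh; omega)]

end Matrix

open Fin.NatCast in
/-- Lemma 3.1 (Terwilliger): entries of powers of an irreducible tridiagonal matrix. -/
theorem stmt_0 {𝕜 : Type*} [Field 𝕜] {d : ℕ}
    (A : Matrix (Fin (d + 1)) (Fin (d + 1)) 𝕜)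
    (htri : ∀ i j : Fin (d + 1), 1 < |((i : ℕ) : ℤ) - ((j : ℕ) : ℤ)| → A i j = 0)
    (hirr : ∀ i j : Fin (d + 1), |((i : ℕ) : ℤ) - ((j : ℕ) : ℤ)| = 1 → A i j ≠ 0) :
    (∀ (r : ℕ) (i j : Fin (d + 1)), r ≤ d → (r : ℤ) < |((i : ℕ) : ℤ) - ((j : ℕ) : ℤ)| →
        (A ^ r) i j = 0)
    ∧ (∀ i j : Fin (d + 1), i ≤ j →
        (A ^ ((j : ℕ) - (i : ℕ))) i j
          = ∏ h ∈ Finset.Ico (i : ℕ) (j : ℕ), A (h : Fin (d + 1)) ((h + 1 : ℕ) : Fin (d + 1))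
        ∧ (A ^ ((j : ℕ) - (i : ℕ))) i j ≠ 0)
    ∧ (∀ i j : Fin (d + 1), j ≤ i →
        (A ^ ((i : ℕ) - (j : ℕ))) i j
          = ∏ h ∈ Finset.Ico (j : ℕ) (i : ℕ), A ((h + 1 : ℕ) : Fin (d + 1)) (h : Fin (d + 1))
        ∧ (A ^ ((i : ℕ) - (j : ℕ))) i j ≠ 0) := by
  have hA : A.IsTridiagonal := htri
  refine ⟨fun r i j _ h => hA.pow_apply_eq_zero h, fun i j hij => ?_, fun i j hij => ?_⟩
  · have hprod := hA.pow_apply_eq_prod_superdiag (Nat.add_sub_of_le (Fin.le_def.1 hij)).symm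
    exact ⟨hprod, hprod ▸ Matrix.prod_superdiag_ne_zero hirr i j⟩
  · have hprod := hA.pow_apply_eq_prod_subdiag (Nat.add_sub_of_le (Fin.le_def.1 hij)).symm
    exact ⟨hprod, hprod ▸ Matrix.prod_subdiag_ne_zero hirr i j⟩
end

section
/- The elements A and E*_0 together generate End(V) as a 𝕜-algebra; that is, the 𝕜-subalgebra of End(V) generated by {A, E*_0} equals End(V). -/
open Module

section Aux

variable {𝕜 : Type*} [Field 𝕜] {V : Type*} [AddCommGroup V] [Module 𝕜 V]
    [FiniteDimensional 𝕜 V]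

/-- If `E` has rank-one range, `F` factors through `E` on the right, `G` factors through `E`
on the left, and both are nonzero, then `F * G ≠ 0`. -/
lemma comp_ne_zero_aux (E F G : Module.End 𝕜 V)
    (hr : Module.finrank 𝕜 (LinearMap.range E) = 1)
    (hF : F * E = F) (hG : E * G = G) (hF0 : F ≠ 0) (hG0 : G ≠ 0) : F * G ≠ 0 := by
  obtain ⟨u, hu⟩ : ∃ u, G u ≠ 0 := by
    by_contra h; push_neg at h; exact hG0 (LinearMap.ext fun u => by simp [h u])
  obtain ⟨w, hw⟩ : ∃ w, F w ≠ 0 := by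
    by_contra h; push_neg at h; exact hF0 (LinearMap.ext fun w => by simp [h w])
  set x := E w with hxdef
  have hFx : F x = F w := by rw [hxdef, ← Module.End.mul_apply, hF]
  have hx0 : x ≠ 0 := by intro h; rw [h, map_zero] at hFx; exact hw hFx.symm
  have hxmem : x ∈ LinearMap.range E := ⟨w, rfl⟩
  have hGu : G u ∈ LinearMap.range E := ⟨G u, by rw [← Module.End.mul_apply, hG]⟩
  have hspan : Submodule.span 𝕜 {x} = LinearMap.range E := by
    apply Submodule.eq_of_le_of_finrank_le
    · rwa [Submodule.span_singleton_le_iff_mem]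
    · rw [hr, finrank_span_singleton hx0]
  rw [← hspan, Submodule.mem_span_singleton] at hGu
  obtain ⟨c, hc⟩ := hGu
  have hc0 : c ≠ 0 := by
    intro h; rw [h, zero_smul] at hc; exact hu hc.symm
  intro h
  have h2 : (F * G) u = 0 := by rw [h]; rfl
  rw [Module.End.mul_apply, ← hc, map_smul, hFx] at h2
  exact smul_ne_zero hc0 hw h2

end Aux

/-- The elements `A` and `E*₀` together generate `End(V)` as a `𝕜`-algebra. -/
theorem stmt_1 {𝕜 : Type*} [Field 𝕜] {V : Type*} [AddCommGroup V] [Module 𝕜 V]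
    [FiniteDimensional 𝕜 V] {d : ℕ} (hdim : Module.finrank 𝕜 V = d + 1)
    (A : Module.End 𝕜 V)
    (Estar : Fin (d + 1) → Module.End 𝕜 V)
    (hidem : ∀ i j, Estar i * Estar j = if i = j then Estar i else 0)
    (hrank : ∀ i, Module.finrank 𝕜 (LinearMap.range (Estar i)) = 1)
    (htri : ∀ i j : Fin (d + 1), 1 < |((i : ℕ) : ℤ) - ((j : ℕ) : ℤ)| → Estar i * A * Estar j = 0)
    (hirr : ∀ i j : Fin (d + 1), |((i : ℕ) : ℤ) - ((j : ℕ) : ℤ)| = 1 → Estar i * A * Estar j ≠ 0) :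
    Algebra.adjoin 𝕜 ({A, Estar 0} : Set (Module.End 𝕜 V)) = ⊤ := by
  have hidem' : ∀ i, Estar i * Estar i = Estar i := fun i => by rw [hidem, if_pos rfl]
  have hE0 : ∀ i, Estar i ≠ 0 := by
    intro i h
    have h2 := hrank i
    rw [h, LinearMap.range_zero] at h2
    simp at h2
  -- Step 1: the idempotents sum to the identity
  have hv : ∀ i, ∃ w : V, w ∈ LinearMap.range (Estar i) ∧ w ≠ 0 := by
    intro i
    have h1 : LinearMap.range (Estar i) ≠ ⊥ := by
      intro h
      have h2 := hrank i
      rw [h] at h2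
      simp at h2
    obtain ⟨w, hvm, hv0⟩ := Submodule.exists_mem_ne_zero_of_ne_bot h1
    exact ⟨w, hvm, hv0⟩
  choose v hvmem hvne using hv
  have hEv : ∀ i j, Estar i (v j) = if i = j then v j else 0 := by
    intro i j
    obtain ⟨y, hy⟩ := hvmem j
    rw [← hy, ← Module.End.mul_apply, hidem i j]
    split
    · rename_i h
      rw [h]
    · rfl
  have hli : LinearIndependent 𝕜 v := by
    rw [Fintype.linearIndependent_iff]
    intro g hg i
    have h3 := congrArg (Estar i) hg
    rw [map_sum, map_zero] at h3
    simp only [map_smul, hEv, smul_ite, smul_zero] at h3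
    rw [Finset.sum_ite_eq Finset.univ i (fun j => g j • v j)] at h3
    simp only [Finset.mem_univ, if_true] at h3
    exact (smul_eq_zero.mp h3).resolve_right (hvne i)
  have hcard : Fintype.card (Fin (d + 1)) = finrank 𝕜 V := by simp [hdim]
  have hone : (∑ i, Estar i) = (1 : Module.End 𝕜 V) := by
    apply (basisOfLinearIndependentOfCardEqFinrank hli hcard).ext
    intro i
    rw [coe_basisOfLinearIndependentOfCardEqFinrank]
    simp only [LinearMap.coe_sum, Finset.sum_apply, hEv, Module.End.one_apply]
    rw [Finset.sum_ite_eq' Finset.univ i (fun _ => v i)]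
    simp
  -- expansion lemmas
  have expandL : ∀ (i : Fin (d + 1)) (k : ℕ), Estar i * A ^ (k + 1) * Estar 0 =
      ∑ j, (Estar i * A * Estar j) * (Estar j * A ^ k * Estar 0) := by
    intro i k
    have step : ∀ j : Fin (d + 1), Estar i * A * (Estar j * (A ^ k * Estar 0)) =
        (Estar i * A * Estar j) * (Estar j * A ^ k * Estar 0) := by
      intro j
      calc Estar i * A * (Estar j * (A ^ k * Estar 0))
          = Estar i * A * ((Estar j * Estar j) * (A ^ k * Estar 0)) := by rw [hidem' j]
        _ = (Estar i * A * Estar j) * (Estar j * A ^ k * Estar 0) := by noncomm_ring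
    calc Estar i * A ^ (k + 1) * Estar 0
        = Estar i * A * ((∑ j, Estar j) * (A ^ k * Estar 0)) := by
          rw [hone, one_mul, pow_succ']; noncomm_ring
      _ = ∑ j, Estar i * A * (Estar j * (A ^ k * Estar 0)) := by
          rw [Finset.sum_mul, Finset.mul_sum]
      _ = ∑ j, (Estar i * A * Estar j) * (Estar j * A ^ k * Estar 0) :=
          Finset.sum_congr rfl fun j _ => step j
  have expandR : ∀ (j : Fin (d + 1)) (l : ℕ), Estar 0 * A ^ (l + 1) * Estar j =
      ∑ m, (Estar 0 * A ^ l * Estar m) * (Estar m * A * Estar j) := by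
    intro j l
    have step : ∀ m : Fin (d + 1), Estar 0 * A ^ l * (Estar m * (A * Estar j)) =
        (Estar 0 * A ^ l * Estar m) * (Estar m * A * Estar j) := by
      intro m
      calc Estar 0 * A ^ l * (Estar m * (A * Estar j))
          = Estar 0 * A ^ l * ((Estar m * Estar m) * (A * Estar j)) := by rw [hidem' m]
        _ = (Estar 0 * A ^ l * Estar m) * (Estar m * A * Estar j) := by noncomm_ring
    calc Estar 0 * A ^ (l + 1) * Estar j
        = Estar 0 * A ^ l * ((∑ m, Estar m) * (A * Estar j)) := by
          rw [hone, one_mul, pow_succ]; noncomm_ring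
      _ = ∑ m, Estar 0 * A ^ l * (Estar m * (A * Estar j)) := by
          rw [Finset.sum_mul, Finset.mul_sum]
      _ = ∑ m, (Estar 0 * A ^ l * Estar m) * (Estar m * A * Estar j) :=
          Finset.sum_congr rfl fun m _ => step m
  -- vanishing lemmas
  have L1 : ∀ (k : ℕ) (i : Fin (d + 1)), k < (i : ℕ) → Estar i * A ^ k * Estar 0 = 0 := by
    intro k
    induction k with
    | zero =>
      intro i hi
      have hne : i ≠ 0 := by
        intro h; rw [h] at hi; simp at hi
      rw [pow_zero, mul_one, hidem, if_neg hne]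
    | succ k ih =>
      intro i hi
      rw [expandL i k]
      apply Finset.sum_eq_zero
      intro j _
      by_cases hcase : 1 < |((i : ℕ) : ℤ) - ((j : ℕ) : ℤ)|
      · rw [htri i j hcase, zero_mul]
      · push_neg at hcase
        rw [abs_le] at hcase
        obtain ⟨hc1, hc2⟩ := hcase
        have hkj : k < (j : ℕ) := by omega
        rw [ih j hkj, mul_zero]
  have L1' : ∀ (l : ℕ) (j : Fin (d + 1)), l < (j : ℕ) → Estar 0 * A ^ l * Estar j = 0 := by
    intro l
    induction l with
    | zero =>
      intro j hj
      have hne : (0 : Fin (d + 1)) ≠ j := by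
        intro h; rw [← h] at hj; simp at hj
      rw [pow_zero, mul_one, hidem, if_neg hne]
    | succ l ih =>
      intro j hj
      rw [expandR j l]
      apply Finset.sum_eq_zero
      intro m _
      by_cases hcase : 1 < |((m : ℕ) : ℤ) - ((j : ℕ) : ℤ)|
      · rw [htri m j hcase, mul_zero]
      · push_neg at hcase
        rw [abs_le] at hcase
        obtain ⟨hc1, hc2⟩ := hcase
        have hlm : l < (m : ℕ) := by omega
        rw [ih m hlm, zero_mul]
  -- nonvanishing lemmas
  have L2 : ∀ (n : ℕ) (i : Fin (d + 1)), (i : ℕ) = n → Estar i * A ^ n * Estar 0 ≠ 0 := by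
    intro n
    induction n with
    | zero =>
      intro i hi
      have h0 : i = 0 := Fin.ext (by simpa using hi)
      rw [h0, pow_zero, mul_one, hidem' 0]
      exact hE0 0
    | succ n ih =>
      intro i hi
      have hnlt : n < d + 1 := by omega
      set j₀ : Fin (d + 1) := ⟨n, hnlt⟩ with hj₀
      have hexp : Estar i * A ^ (n + 1) * Estar 0 =
          (Estar i * A * Estar j₀) * (Estar j₀ * A ^ n * Estar 0) := by
        rw [expandL i n]
        apply Finset.sum_eq_single_of_mem j₀ (Finset.mem_univ _)
        intro j _ hj
        by_cases hcase : 1 < |((i : ℕ) : ℤ) - ((j : ℕ) : ℤ)|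
        · rw [htri i j hcase, zero_mul]
        · push_neg at hcase
          rw [abs_le] at hcase
          obtain ⟨hc1, hc2⟩ := hcase
          have hjv : (j : ℕ) ≠ n := fun h => hj (Fin.ext (by simp [hj₀, h]))
          have hjn : n < (j : ℕ) := by omega
          rw [L1 n j hjn, mul_zero]
      rw [hexp]
      apply comp_ne_zero_aux (Estar j₀) _ _ (hrank j₀)
      · rw [mul_assoc, hidem' j₀]
      · rw [← mul_assoc, ← mul_assoc, hidem' j₀]
      · apply hirr
        have : ((i : ℕ) : ℤ) - ((j₀ : ℕ) : ℤ) = 1 := by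
          simp only [hj₀, hi]
          push_cast
          ring
        rw [this]
        exact abs_one
      · exact ih j₀ rfl
  have L2' : ∀ (n : ℕ) (j : Fin (d + 1)), (j : ℕ) = n → Estar 0 * A ^ n * Estar j ≠ 0 := by
    intro n
    induction n with
    | zero =>
      intro j hj
      have h0 : j = 0 := Fin.ext (by simpa using hj)
      rw [h0, pow_zero, mul_one, hidem' 0]
      exact hE0 0
    | succ n ih =>
      intro j hj
      have hnlt : n < d + 1 := by omega
      set m₀ : Fin (d + 1) := ⟨n, hnlt⟩ with hm₀
      have hexp : Estar 0 * A ^ (n + 1) * Estar j =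
          (Estar 0 * A ^ n * Estar m₀) * (Estar m₀ * A * Estar j) := by
        rw [expandR j n]
        apply Finset.sum_eq_single_of_mem m₀ (Finset.mem_univ _)
        intro m _ hm
        by_cases hcase : 1 < |((m : ℕ) : ℤ) - ((j : ℕ) : ℤ)|
        · rw [htri m j hcase, mul_zero]
        · push_neg at hcase
          rw [abs_le] at hcase
          obtain ⟨hc1, hc2⟩ := hcase
          have hmv : (m : ℕ) ≠ n := fun h => hm (Fin.ext (by simp [hm₀, h]))
          have hmn : n < (m : ℕ) := by omega
          rw [L1' n m hmn, zero_mul]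
      rw [hexp]
      apply comp_ne_zero_aux (Estar m₀) _ _ (hrank m₀)
      · rw [mul_assoc, hidem' m₀]
      · rw [← mul_assoc, ← mul_assoc, hidem' m₀]
      · exact ih m₀ rfl
      · apply hirr
        have : ((m₀ : ℕ) : ℤ) - ((j : ℕ) : ℤ) = -1 := by
          simp only [hm₀, hj]
          push_cast
          ring
        rw [this]
        simp
  -- splitting lemma
  have hsplit : ∀ (i j : Fin (d + 1)) (k l : ℕ),
      Estar i * (A ^ k * Estar 0 * A ^ l) * Estar j =
      (Estar i * A ^ k * Estar 0) * (Estar 0 * A ^ l * Estar j) := by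
    intro i j k l
    calc Estar i * (A ^ k * Estar 0 * A ^ l) * Estar j
        = Estar i * (A ^ k * (Estar 0 * Estar 0) * A ^ l) * Estar j := by rw [hidem' 0]
      _ = (Estar i * A ^ k * Estar 0) * (Estar 0 * A ^ l * Estar j) := by noncomm_ring
  -- the family G
  set S := Algebra.adjoin 𝕜 ({A, Estar 0} : Set (Module.End 𝕜 V)) with hS
  have hGmem : ∀ p : Fin (d + 1) × Fin (d + 1),
      A ^ ((p.1 : ℕ)) * Estar 0 * A ^ ((p.2 : ℕ)) ∈ S := by
    intro p
    have hA : A ∈ S := Algebra.subset_adjoin (by simp)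
    have hE : Estar 0 ∈ S := Algebra.subset_adjoin (by simp)
    exact mul_mem (mul_mem (pow_mem hA _) hE) (pow_mem hA _)
  have hI : LinearIndependent 𝕜
      (fun p : Fin (d + 1) × Fin (d + 1) => A ^ ((p.1 : ℕ)) * Estar 0 * A ^ ((p.2 : ℕ))) := by
    rw [Fintype.linearIndependent_iff]
    intro g hg
    have key : ∀ i j : Fin (d + 1),
        (∀ k l : Fin (d + 1), ((i : ℕ) < (k : ℕ) ∨ (i = k ∧ (j : ℕ) < (l : ℕ))) → g (k, l) = 0) →
        g (i, j) = 0 := by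
      intro i j hmax
      have h1 : ∑ p : Fin (d + 1) × Fin (d + 1),
          g p • ((Estar i * A ^ ((p.1 : ℕ)) * Estar 0) * (Estar 0 * A ^ ((p.2 : ℕ)) * Estar j))
          = 0 := by
        have h0 : Estar i * (∑ p : Fin (d + 1) × Fin (d + 1),
            g p • (A ^ ((p.1 : ℕ)) * Estar 0 * A ^ ((p.2 : ℕ)))) * Estar j = 0 := by
          rw [hg, mul_zero, zero_mul]
        rw [Finset.mul_sum, Finset.sum_mul] at h0
        rw [← h0]
        apply Finset.sum_congr rfl
        intro p _
        rw [mul_smul_comm, smul_mul_assoc, hsplit]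
      rw [Finset.sum_eq_single (i, j)] at h1
      · rcases smul_eq_zero.mp h1 with h | h
        · exact h
        · exact absurd h (comp_ne_zero_aux (Estar 0) _ _ (hrank 0)
            (by rw [mul_assoc, hidem' 0]) (by rw [← mul_assoc, ← mul_assoc, hidem' 0])
            (L2 (i : ℕ) i rfl) (L2' (j : ℕ) j rfl))
      · rintro ⟨k, l⟩ _ hp
        rcases lt_trichotomy ((k : ℕ)) ((i : ℕ)) with hk | hk | hk
        · rw [L1 (k : ℕ) i hk, zero_mul, smul_zero]
        · have hik : i = k := Fin.ext hk.symm
          rcases lt_trichotomy ((l : ℕ)) ((j : ℕ)) with hl | hl | hl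
          · rw [L1' (l : ℕ) j hl, mul_zero, smul_zero]
          · exact absurd (Prod.ext (Fin.ext hk) (Fin.ext hl)) hp
          · rw [hmax k l (Or.inr ⟨hik, hl⟩), zero_smul]
        · rw [hmax k l (Or.inl hk), zero_smul]
      · intro h
        exact absurd (Finset.mem_univ _) h
    have hall : ∀ (N : ℕ) (i j : Fin (d + 1)),
        (d - (i : ℕ)) * (d + 1) + (d - (j : ℕ)) ≤ N → g (i, j) = 0 := by
      intro N
      induction N with
      | zero =>
        intro i j hN
        apply key
        intro k l hkl
        exfalso
        have hk := k.isLt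
        have hl := l.isLt
        have hi := i.isLt
        have hj := j.isLt
        have h1 : (d - (i : ℕ)) * (d + 1) = 0 ∧ d - (j : ℕ) = 0 := by omega
        have h2 : d - (i : ℕ) = 0 := by
          rcases Nat.mul_eq_zero.mp h1.1 with h | h
          · exact h
          · omega
        rcases hkl with h | ⟨h, h'⟩ <;> omega
      | succ N ihN =>
        intro i j hN
        apply key
        intro k l hkl
        apply ihN k l
        have hk := k.isLt
        have hl := l.isLt
        have hi := i.isLt
        have hj := j.isLt
        rcases hkl with h | ⟨h, h'⟩
        · have hlt : (d - (k : ℕ)) * (d + 1) + (d - (l : ℕ)) < N + 1 :=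
            calc (d - (k : ℕ)) * (d + 1) + (d - (l : ℕ))
                < (d - (k : ℕ)) * (d + 1) + (d + 1) := Nat.add_lt_add_left (by omega) _
              _ = (d - (k : ℕ) + 1) * (d + 1) := by ring
              _ ≤ (d - (i : ℕ)) * (d + 1) := Nat.mul_le_mul_right _ (by omega)
              _ ≤ (d - (i : ℕ)) * (d + 1) + (d - (j : ℕ)) := Nat.le_add_right _ _
              _ ≤ N + 1 := hN
          omega
        · have hik : (i : ℕ) = (k : ℕ) := by rw [h]
          have hlt : (d - (k : ℕ)) * (d + 1) + (d - (l : ℕ)) <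
              (d - (i : ℕ)) * (d + 1) + (d - (j : ℕ)) := by
            rw [← hik]
            exact Nat.add_lt_add_left (by omega) _
          omega
    rintro ⟨i, j⟩
    exact hall ((d - (i : ℕ)) * (d + 1) + (d - (j : ℕ))) i j le_rfl
  -- conclude
  have hmem' : ∀ q : Fin (d + 1) × Fin (d + 1),
      A ^ ((q.1 : ℕ)) * Estar 0 * A ^ ((q.2 : ℕ)) ∈ Subalgebra.toSubmodule S := hGmem
  have hI' : LinearIndependent 𝕜 (fun q : Fin (d + 1) × Fin (d + 1) =>
      (⟨A ^ ((q.1 : ℕ)) * Estar 0 * A ^ ((q.2 : ℕ)), hmem' q⟩ :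
        Subalgebra.toSubmodule S)) := by
    apply LinearIndependent.of_comp (Subalgebra.toSubmodule S).subtype
    exact hI
  have hEnd : finrank 𝕜 (Module.End 𝕜 V) = (d + 1) * (d + 1) := by
    rw [Module.finrank_linearMap, hdim]
  have hle : finrank 𝕜 (Module.End 𝕜 V) ≤ finrank 𝕜 (Subalgebra.toSubmodule S) := by
    have := hI'.fintype_card_le_finrank
    simpa [hEnd] using this
  have htop : Subalgebra.toSubmodule S = ⊤ :=
    Submodule.eq_top_of_finrank_eq (le_antisymm (Submodule.finrank_le _) hle)
  rwa [Algebra.toSubmodule_eq_top] at htop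
end

section
/- For 0 ≤ i,j ≤ d, E_i A* E_j = 0 if and only if E_j A* E_i = 0. -/
set_option linter.unusedSectionVars false
set_option maxHeartbeats 1000000

open Module

section AuxStmt4

variable {𝕜 : Type*} [Field 𝕜] {V : Type*} [AddCommGroup V] [Module 𝕜 V]
    [FiniteDimensional 𝕜 V] {d : ℕ}

private noncomputable def stmt4_g (d : ℕ) {𝕜 : Type*} [Field 𝕜]
    (a : Fin (d + 1) → Fin (d + 1) → 𝕜) (k : ℕ) : 𝕜 :=
  if h : k + 1 ≤ d then
    a ⟨k, by omega⟩ ⟨k + 1, by omega⟩ / a ⟨k + 1, by omega⟩ ⟨k, by omega⟩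
  else 1

private noncomputable def stmt4_dc (d : ℕ) {𝕜 : Type*} [Field 𝕜]
    (a : Fin (d + 1) → Fin (d + 1) → 𝕜) (i : Fin (d + 1)) : 𝕜 :=
  ∏ k ∈ Finset.range (i : ℕ), stmt4_g d a k

private lemma stmt4_dc_succ {𝕜 : Type*} [Field 𝕜] {d : ℕ}
    (a : Fin (d + 1) → Fin (d + 1) → 𝕜) (i j : Fin (d + 1)) (h : (i : ℕ) + 1 = (j : ℕ)) :
    stmt4_dc d a j = stmt4_dc d a i * (a i j / a j i) := by
  have hle : (i : ℕ) + 1 ≤ d := by have := j.isLt; omega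
  unfold stmt4_dc
  rw [← h, Finset.prod_range_succ]
  congr 1
  unfold stmt4_g
  rw [dif_pos hle]
  have e1 : (⟨(i : ℕ), by omega⟩ : Fin (d + 1)) = i := Fin.ext rfl
  have e2 : (⟨(i : ℕ) + 1, by omega⟩ : Fin (d + 1)) = j := Fin.ext h
  rw [e1, e2]

private lemma stmt4_exists_good_basis (hdim : Module.finrank 𝕜 V = d + 1)
    (F : Fin (d + 1) → Module.End 𝕜 V)
    (hidem : ∀ i j, F i * F j = if i = j then F i else 0)
    (hrank : ∀ i, Module.finrank 𝕜 (LinearMap.range (F i)) = 1) :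
    ∃ b : Basis (Fin (d + 1)) 𝕜 V, ∀ i j, F j (b i) = if j = i then b i else 0 := by
  have hv : ∀ i : Fin (d + 1), ∃ v : V, v ∈ LinearMap.range (F i) ∧ v ≠ 0 := by
    intro i
    have hne : LinearMap.range (F i) ≠ ⊥ := by
      intro hb
      have := hrank i
      rw [hb] at this
      simp at this
    obtain ⟨x, hx, hx0⟩ := (Submodule.ne_bot_iff _).mp hne
    exact ⟨x, hx, hx0⟩
  choose v hvmem hvne using hv
  have hFv : ∀ i j, F j (v i) = if j = i then v i else 0 := by
    intro i j
    obtain ⟨w, hw⟩ := hvmem i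
    rw [← hw, ← Module.End.mul_apply, hidem]
    by_cases h : j = i
    · subst h; simp [hw]
    · simp [h]
  have li : LinearIndependent 𝕜 v := by
    rw [Fintype.linearIndependent_iff]
    intro g hg j
    have h2 := congrArg (F j) hg
    rw [map_sum, map_zero] at h2
    simp only [map_smul, hFv, smul_ite, smul_zero] at h2
    rw [Finset.sum_ite_eq Finset.univ j (fun i => g i • v i)] at h2
    simp at h2
    rcases h2 with h2 | h2
    · exact h2
    · exact absurd h2 (hvne j)
  refine ⟨basisOfLinearIndependentOfCardEqFinrank li (by simp [hdim]), ?_⟩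
  intro i j
  rw [coe_basisOfLinearIndependentOfCardEqFinrank]
  exact hFv i j

private lemma stmt4_sum_eq_one (b : Basis (Fin (d + 1)) 𝕜 V)
    (F : Fin (d + 1) → Module.End 𝕜 V)
    (hFb : ∀ i j, F j (b i) = if j = i then b i else 0) :
    ∑ j, F j = 1 := by
  refine b.ext fun i => ?_
  rw [LinearMap.sum_apply]
  simp [hFb]

private noncomputable def stmt4_phi (b : Basis (Fin (d + 1)) 𝕜 V) (dc : Fin (d + 1) → 𝕜)
    (x y : V) : 𝕜 :=
  ∑ i, dc i * (b.repr x i * b.repr y i)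

variable (b : Basis (Fin (d + 1)) 𝕜 V) (dc : Fin (d + 1) → 𝕜)

private lemma stmt4_phi_zero_left (y : V) : stmt4_phi b dc 0 y = 0 := by
  simp [stmt4_phi]

private lemma stmt4_phi_smul_left (c : 𝕜) (x y : V) :
    stmt4_phi b dc (c • x) y = c * stmt4_phi b dc x y := by
  simp only [stmt4_phi, map_smul, Finsupp.smul_apply, smul_eq_mul, Finset.mul_sum]
  exact Finset.sum_congr rfl fun i _ => by ring

private lemma stmt4_phi_smul_right (c : 𝕜) (x y : V) :
    stmt4_phi b dc x (c • y) = c * stmt4_phi b dc x y := by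
  simp only [stmt4_phi, map_smul, Finsupp.smul_apply, smul_eq_mul, Finset.mul_sum]
  exact Finset.sum_congr rfl fun i _ => by ring

private lemma stmt4_phi_sum_left {ι : Type*} (s : Finset ι) (u : ι → V) (y : V) :
    stmt4_phi b dc (∑ k ∈ s, u k) y = ∑ k ∈ s, stmt4_phi b dc (u k) y := by
  simp only [stmt4_phi, map_sum, Finsupp.finset_sum_apply, Finset.sum_mul, Finset.mul_sum]
  exact Finset.sum_comm

private lemma stmt4_phi_sum_right {ι : Type*} (s : Finset ι) (x : V) (w : ι → V) :
    stmt4_phi b dc x (∑ k ∈ s, w k) = ∑ k ∈ s, stmt4_phi b dc x (w k) := by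
  simp only [stmt4_phi, map_sum, Finsupp.finset_sum_apply, Finset.mul_sum]
  exact Finset.sum_comm

private lemma stmt4_phi_basis_left (j : Fin (d + 1)) (y : V) :
    stmt4_phi b dc (b j) y = dc j * b.repr y j := by
  simp only [stmt4_phi, Basis.repr_self, Finsupp.single_apply]
  have h1 : ∀ i, dc i * ((if j = i then (1:𝕜) else 0) * b.repr y i)
      = if j = i then dc i * b.repr y i else 0 := fun i => by split <;> ring
  rw [Finset.sum_congr rfl fun i _ => h1 i,
    Finset.sum_ite_eq Finset.univ j (fun i => dc i * b.repr y i)]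
  simp

private lemma stmt4_phi_basis_right (j : Fin (d + 1)) (x : V) :
    stmt4_phi b dc x (b j) = dc j * b.repr x j := by
  simp only [stmt4_phi, Basis.repr_self, Finsupp.single_apply]
  have h1 : ∀ i, dc i * (b.repr x i * (if j = i then (1:𝕜) else 0))
      = if j = i then dc i * b.repr x i else 0 := fun i => by split <;> ring
  rw [Finset.sum_congr rfl fun i _ => h1 i,
    Finset.sum_ite_eq Finset.univ j (fun i => dc i * b.repr x i)]
  simp

private lemma stmt4_phi_nondeg (hdc : ∀ i, dc i ≠ 0) (w : V)
    (h : ∀ x, stmt4_phi b dc x w = 0) : w = 0 := by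
  have hr : b.repr w = 0 := by
    ext j
    have := h (b j)
    rw [stmt4_phi_basis_left] at this
    rcases mul_eq_zero.mp this with h' | h'
    · exact absurd h' (hdc j)
    · simpa using h'
  have := congrArg (fun f => b.repr.symm f) hr
  simpa using this

end AuxStmt4

/-- For 0 ≤ i,j ≤ d, EᵢA*Eⱼ = 0 iff EⱼA*Eᵢ = 0. -/
theorem stmt_4 {𝕜 : Type*} [Field 𝕜] {V : Type*} [AddCommGroup V] [Module 𝕜 V]
    [FiniteDimensional 𝕜 V] {d : ℕ} (hdim : Module.finrank 𝕜 V = d + 1)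
    (A : Module.End 𝕜 V)
    (Estar : Fin (d + 1) → Module.End 𝕜 V)
    (hidem : ∀ i j, Estar i * Estar j = if i = j then Estar i else 0)
    (hrank : ∀ i, Module.finrank 𝕜 (LinearMap.range (Estar i)) = 1)
    (htri : ∀ i j : Fin (d + 1), 1 < |((i : ℕ) : ℤ) - ((j : ℕ) : ℤ)| → Estar i * A * Estar j = 0)
    (hirr : ∀ i j : Fin (d + 1), |((i : ℕ) : ℤ) - ((j : ℕ) : ℤ)| = 1 → Estar i * A * Estar j ≠ 0)
    (hd : 1 ≤ d)
    (θ : Fin (d + 1) → 𝕜) (hθ : Function.Injective θ)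
    (E : Fin (d + 1) → Module.End 𝕜 V)
    (hEidem : ∀ i j, E i * E j = if i = j then E i else 0)
    (hErank : ∀ i, Module.finrank 𝕜 (LinearMap.range (E i)) = 1)
    (hA : A = ∑ i, θ i • E i)
    (θstar : Fin (d + 1) → 𝕜)
    (Astar : Module.End 𝕜 V) (hAstar : Astar = ∑ i, θstar i • Estar i)
    : ∀ i j : Fin (d + 1), E i * Astar * E j = 0 ↔ E j * Astar * E i = 0 := by
  classical
  obtain ⟨b, hb⟩ := stmt4_exists_good_basis hdim Estar hidem hrank
  obtain ⟨c, hc⟩ := stmt4_exists_good_basis hdim E hEidem hErank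
  have sumE1 : ∑ j, E j = 1 := stmt4_sum_eq_one c E hc
  have hEstarApply : ∀ (k : Fin (d + 1)) (x : V), Estar k x = b.repr x k • b k := by
    intro k x
    conv_lhs => rw [← b.sum_repr x]
    rw [map_sum]
    simp only [map_smul, hb, smul_ite, smul_zero]
    rw [Finset.sum_ite_eq Finset.univ k (fun i => b.repr x i • b i)]
    simp
  set aa : Fin (d + 1) → Fin (d + 1) → 𝕜 := fun i j => b.repr (A (b j)) i with haa
  -- composite = 0 iff matrix entry = 0
  have hcompEq : ∀ i j : Fin (d + 1), (Estar i * A * Estar j = 0) ↔ aa i j = 0 := by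
    intro i j
    constructor
    · intro h
      have h2 := congrArg (fun f : Module.End 𝕜 V => f (b j)) h
      simp only [Module.End.mul_apply, LinearMap.zero_apply] at h2
      rw [hb j j, if_pos rfl, hEstarApply] at h2
      rcases smul_eq_zero.mp h2 with h' | h'
      · exact h'
      · exact absurd h' (b.ne_zero i)
    · intro h
      ext x
      simp only [Module.End.mul_apply, LinearMap.zero_apply]
      rw [hEstarApply j x, map_smul, map_smul, hEstarApply i]
      have h0 : b.repr (A (b j)) i = 0 := h
      rw [h0]
      simp
  have hane : ∀ i j : Fin (d + 1), ((i : ℕ) + 1 = (j : ℕ) ∨ (j : ℕ) + 1 = (i : ℕ)) →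
      aa i j ≠ 0 := by
    intro i j h h0
    refine hirr i j ?_ ((hcompEq i j).mpr h0)
    rcases h with h | h
    · have e : ((i : ℕ) : ℤ) - ((j : ℕ) : ℤ) = -1 := by omega
      rw [e]; norm_num
    · have e : ((i : ℕ) : ℤ) - ((j : ℕ) : ℤ) = 1 := by omega
      rw [e]; norm_num
  have ha0 : ∀ i j : Fin (d + 1), (i : ℕ) + 1 ≠ (j : ℕ) → (j : ℕ) + 1 ≠ (i : ℕ) →
      (i : ℕ) ≠ (j : ℕ) → aa i j = 0 := by
    intro i j h1 h2 h3
    refine (hcompEq i j).mp (htri i j ?_)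
    rw [lt_abs]
    omega
  have hgne : ∀ k : ℕ, stmt4_g d aa k ≠ 0 := by
    intro k
    unfold stmt4_g
    split
    · rename_i hk
      exact div_ne_zero (hane _ _ (Or.inl rfl)) (hane _ _ (Or.inr rfl))
    · exact one_ne_zero
  have hdcne : ∀ i, stmt4_dc d aa i ≠ 0 := fun i =>
    Finset.prod_ne_zero_iff.mpr fun k _ => hgne k
  have key : ∀ i j : Fin (d + 1), stmt4_dc d aa i * aa i j = stmt4_dc d aa j * aa j i := by
    intro i j
    by_cases h1 : (i : ℕ) + 1 = (j : ℕ)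
    · have hji : aa j i ≠ 0 := hane j i (Or.inr h1)
      rw [stmt4_dc_succ aa i j h1, mul_assoc, div_mul_cancel₀ _ hji]
    · by_cases h2 : (j : ℕ) + 1 = (i : ℕ)
      · have hij : aa i j ≠ 0 := hane i j (Or.inr h2)
        rw [stmt4_dc_succ aa j i h2, mul_assoc, div_mul_cancel₀ _ hij]
      · by_cases h3 : i = j
        · rw [h3]
        · have hz1 : aa i j = 0 := ha0 i j h1 h2 (fun e => h3 (Fin.ext e))
          have hz2 : aa j i = 0 := ha0 j i h2 h1 (fun e => h3 (Fin.ext e.symm))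
          rw [hz1, hz2, mul_zero, mul_zero]
  have reprA : ∀ (x : V) (i : Fin (d + 1)), b.repr (A x) i = ∑ j, aa i j * b.repr x j := by
    intro x i
    conv_lhs => rw [← b.sum_repr x]
    rw [map_sum, map_sum, Finsupp.finset_sum_apply]
    refine Finset.sum_congr rfl fun j _ => ?_
    rw [map_smul, map_smul, Finsupp.smul_apply, smul_eq_mul]
    exact mul_comm _ _
  have hadjA : ∀ x y : V, stmt4_phi b (stmt4_dc d aa) (A x) y
      = stmt4_phi b (stmt4_dc d aa) x (A y) := by
    intro x y
    show (∑ i, stmt4_dc d aa i * (b.repr (A x) i * b.repr y i))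
        = ∑ i, stmt4_dc d aa i * (b.repr x i * b.repr (A y) i)
    calc ∑ i, stmt4_dc d aa i * (b.repr (A x) i * b.repr y i)
        = ∑ i, ∑ j, (stmt4_dc d aa i * aa i j) * (b.repr x j * b.repr y i) := by
          refine Finset.sum_congr rfl fun i _ => ?_
          rw [reprA, Finset.sum_mul, Finset.mul_sum]
          exact Finset.sum_congr rfl fun j _ => by ring
      _ = ∑ j, ∑ i, (stmt4_dc d aa i * aa i j) * (b.repr x j * b.repr y i) :=
          Finset.sum_comm
      _ = ∑ j, ∑ i, (stmt4_dc d aa j * aa j i) * (b.repr x j * b.repr y i) := by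
          refine Finset.sum_congr rfl fun j _ => Finset.sum_congr rfl fun i _ => ?_
          rw [key i j]
      _ = ∑ j, stmt4_dc d aa j * (b.repr x j * b.repr (A y) j) := by
          refine Finset.sum_congr rfl fun j _ => ?_
          rw [reprA, Finset.mul_sum, Finset.mul_sum]
          exact Finset.sum_congr rfl fun i _ => by ring
  have hadjEstar : ∀ (k : Fin (d + 1)) (x y : V),
      stmt4_phi b (stmt4_dc d aa) (Estar k x) y = stmt4_phi b (stmt4_dc d aa) x (Estar k y) := by
    intro k x y
    rw [hEstarApply, hEstarApply, stmt4_phi_smul_left, stmt4_phi_smul_right,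
      stmt4_phi_basis_left, stmt4_phi_basis_right]
    ring
  have hadjAstar : ∀ x y : V, stmt4_phi b (stmt4_dc d aa) (Astar x) y
      = stmt4_phi b (stmt4_dc d aa) x (Astar y) := by
    intro x y
    rw [hAstar]
    simp only [LinearMap.sum_apply, LinearMap.smul_apply]
    rw [stmt4_phi_sum_left, stmt4_phi_sum_right]
    refine Finset.sum_congr rfl fun k _ => ?_
    rw [stmt4_phi_smul_left, stmt4_phi_smul_right, hadjEstar]
  have hAE : ∀ (k : Fin (d + 1)) (x : V), A (E k x) = θ k • E k x := by
    intro k x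
    rw [hA, LinearMap.sum_apply]
    have h1 : ∀ m : Fin (d + 1), (θ m • E m) (E k x) = if m = k then θ k • E k x else 0 := by
      intro m
      rw [LinearMap.smul_apply, ← Module.End.mul_apply, hEidem]
      by_cases h : m = k
      · subst h; simp
      · simp [h]
    rw [Finset.sum_congr rfl fun m _ => h1 m,
      Finset.sum_ite_eq' Finset.univ k (fun _ => θ k • E k x)]
    simp
  have horth : ∀ (k l : Fin (d + 1)), k ≠ l → ∀ x y : V,
      stmt4_phi b (stmt4_dc d aa) (E k x) (E l y) = 0 := by
    intro k l hkl x y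
    have h1 := hadjA (E k x) (E l y)
    rw [hAE, hAE, stmt4_phi_smul_left, stmt4_phi_smul_right] at h1
    have h2 : (θ k - θ l) * stmt4_phi b (stmt4_dc d aa) (E k x) (E l y) = 0 := by
      rw [sub_mul, h1]; ring
    rcases mul_eq_zero.mp h2 with h | h
    · exact absurd (hθ (sub_eq_zero.mp h)) hkl
    · exact h
  have hadjE : ∀ (k : Fin (d + 1)) (x y : V),
      stmt4_phi b (stmt4_dc d aa) (E k x) y = stmt4_phi b (stmt4_dc d aa) x (E k y) := by
    intro k x y
    have hy : y = ∑ l, E l y := by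
      conv_lhs => rw [show y = (1 : Module.End 𝕜 V) y from rfl, ← sumE1]
      rw [LinearMap.sum_apply]
    have hx : x = ∑ l, E l x := by
      conv_lhs => rw [show x = (1 : Module.End 𝕜 V) x from rfl, ← sumE1]
      rw [LinearMap.sum_apply]
    calc stmt4_phi b (stmt4_dc d aa) (E k x) y
        = ∑ l, stmt4_phi b (stmt4_dc d aa) (E k x) (E l y) := by
          conv_lhs => rw [hy]
          exact stmt4_phi_sum_right b (stmt4_dc d aa) Finset.univ _ _
      _ = stmt4_phi b (stmt4_dc d aa) (E k x) (E k y) := by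
          rw [Finset.sum_eq_single k (fun l _ hl => horth k l (Ne.symm hl) x y) (by simp)]
      _ = ∑ l, stmt4_phi b (stmt4_dc d aa) (E l x) (E k y) := by
          rw [Finset.sum_eq_single k (fun l _ hl => horth l k hl x y) (by simp)]
      _ = stmt4_phi b (stmt4_dc d aa) x (E k y) := by
          conv_rhs => rw [hx]
          exact (stmt4_phi_sum_left b (stmt4_dc d aa) Finset.univ _ _).symm
  have main : ∀ i j : Fin (d + 1), E i * Astar * E j = 0 → E j * Astar * E i = 0 := by
    intro i j h
    have hrel : ∀ x y : V, stmt4_phi b (stmt4_dc d aa) ((E i * Astar * E j) x) y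
        = stmt4_phi b (stmt4_dc d aa) x ((E j * Astar * E i) y) := by
      intro x y
      simp only [Module.End.mul_apply]
      rw [hadjE i, hadjAstar, hadjE j]
    ext y
    rw [LinearMap.zero_apply]
    refine stmt4_phi_nondeg b (stmt4_dc d aa) hdcne _ fun x => ?_
    rw [← hrel x y, h, LinearMap.zero_apply]
    exact stmt4_phi_zero_left b (stmt4_dc d aa) y
  intro i j
  exact ⟨main i j, main j i⟩
end

section
/- Assume that θ*_i ≠ θ*_0 for 1 ≤ i ≤ d. Then the graph Δ is connected. -/
open Module LinearMap

section Helpers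

variable {𝕜 : Type*} [Field 𝕜] {V : Type*} [AddCommGroup V] [Module 𝕜 V]

/-- If `B` maps each `range (E i)` (for `i` with `q i`) into `U`, then `B` maps the
corresponding supremum into `U`. -/
lemma mapInto {ι : Type*} (E : ι → Module.End 𝕜 V) (q : ι → Prop) (B : Module.End 𝕜 V)
    (U : Submodule 𝕜 V) (h : ∀ i, q i → ∀ v, B (E i v) ∈ U)
    {x : V} (hx : x ∈ ⨆ i, ⨆ (_ : q i), LinearMap.range (E i)) : B x ∈ U := by
  have hle : Submodule.map B (⨆ i, ⨆ (_ : q i), LinearMap.range (E i)) ≤ U := by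
    rw [Submodule.map_iSup]
    refine iSup_le fun i => ?_
    rw [Submodule.map_iSup]
    refine iSup_le fun hqi => ?_
    rintro y ⟨z, ⟨v, rfl⟩, rfl⟩
    exact h i hqi v
  exact hle ⟨x, hx, rfl⟩

lemma orthApply {n : ℕ} (E : Fin n → Module.End 𝕜 V)
    (hidem : ∀ i j, E i * E j = if i = j then E i else 0) :
    ∀ i j, i ≠ j → ∀ v, E i (E j v) = 0 := by
  intro i j hij v
  have h := hidem i j
  rw [if_neg hij] at h
  simpa using DFunLike.congr_fun h v

lemma idemApply {n : ℕ} (E : Fin n → Module.End 𝕜 V)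
    (hidem : ∀ i j, E i * E j = if i = j then E i else 0) :
    ∀ i v, E i (E i v) = E i v := by
  intro i v
  have h := hidem i i
  rw [if_pos rfl] at h
  simpa using DFunLike.congr_fun h v

lemma sumIdemOne [FiniteDimensional 𝕜 V] {n : ℕ} (hdim : Module.finrank 𝕜 V = n)
    (E : Fin n → Module.End 𝕜 V)
    (hidem : ∀ i j, E i * E j = if i = j then E i else 0)
    (hrank : ∀ i, Module.finrank 𝕜 (LinearMap.range (E i)) = 1) :
    ∑ i, E i = 1 := by
  classical
  have horth := orthApply E hidem
  have hid := idemApply E hidem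
  have aux : ∀ s : Finset (Fin n),
      Module.finrank 𝕜 (⨆ i ∈ s, LinearMap.range (E i) : Submodule 𝕜 V) = s.card := by
    intro s
    induction s using Finset.induction_on with
    | empty => simp
    | @insert a s ha IH =>
      rw [Finset.iSup_insert]
      have hinf : LinearMap.range (E a) ⊓ (⨆ i ∈ s, LinearMap.range (E i)) = ⊥ := by
        rw [eq_bot_iff]
        rintro x ⟨hx1, hx2⟩
        have h1 : E a x ∈ (⊥ : Submodule 𝕜 V) := by
          refine mapInto E (· ∈ s) (E a) ⊥ (fun i hi v => ?_) hx2
          have : a ≠ i := by rintro rfl; exact ha hi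
          simp [horth a i this v]
        obtain ⟨y, rfl⟩ := hx1
        rw [hid a y] at h1
        exact h1
      have hsum := Submodule.finrank_sup_add_finrank_inf_eq (LinearMap.range (E a))
        (⨆ i ∈ s, LinearMap.range (E i))
      rw [hinf, hrank a, IH] at hsum
      simp only [finrank_bot, add_zero] at hsum
      rw [hsum, Finset.card_insert_of_notMem ha]
      omega
  have htop : (⨆ i, ⨆ (_ : i ∈ (Finset.univ : Finset (Fin n))), LinearMap.range (E i)
      : Submodule 𝕜 V) = ⊤ := by
    apply Submodule.eq_top_of_finrank_eq
    rw [aux Finset.univ, Finset.card_univ, Fintype.card_fin, hdim]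
  ext v
  have hv : v ∈ (⨆ i, ⨆ (_ : i ∈ (Finset.univ : Finset (Fin n))), LinearMap.range (E i)
      : Submodule 𝕜 V) := htop ▸ Submodule.mem_top
  have h0 : ((∑ i, E i) - 1) v ∈ (⊥ : Submodule 𝕜 V) := by
    refine mapInto E (· ∈ (Finset.univ : Finset (Fin n))) _ ⊥ (fun j _ w => ?_) hv
    have hs : (∑ i, E i) (E j w) = E j w := by
      rw [LinearMap.sum_apply]
      rw [Finset.sum_eq_single j (fun i _ hij => horth i j hij w) (by simp)]
      exact hid j w
    simp [LinearMap.sub_apply, hs]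
  simp only [Submodule.mem_bot, LinearMap.sub_apply, sub_eq_zero] at h0
  simpa using h0

lemma diagMul {n : ℕ} (E : Fin n → Module.End 𝕜 V)
    (hidem : ∀ i j, E i * E j = if i = j then E i else 0) (f g : Fin n → 𝕜) :
    (∑ i, f i • E i) * (∑ i, g i • E i) = ∑ i, (f i * g i) • E i := by
  classical
  rw [Finset.sum_mul_sum]
  have h : ∀ i j : Fin n, (f i • E i) * (g j • E j)
      = if i = j then (f i * g j) • E i else 0 := by
    intro i j
    rw [smul_mul_assoc, mul_smul_comm, hidem, smul_smul]
    split <;> simp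
  simp_rw [h]
  simp [Finset.sum_ite_eq]

lemma listDiag {n : ℕ} (E : Fin n → Module.End 𝕜 V)
    (hidem : ∀ i j, E i * E j = if i = j then E i else 0)
    (hone : ∑ i, E i = 1) (θ : Fin n → 𝕜) (B : Module.End 𝕜 V)
    (hB : B = ∑ i, θ i • E i) (l : List 𝕜) :
    (l.map fun v => B - v • 1).prod = ∑ i, (l.map fun v => θ i - v).prod • E i := by
  induction l with
  | nil => simpa using hone.symm
  | cons a l IH =>
    rw [List.map_cons, List.prod_cons, IH]
    have h1 : B - a • 1 = ∑ i, (θ i - a) • E i := by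
      rw [hB, ← hone, Finset.smul_sum, ← Finset.sum_sub_distrib]
      simp [sub_smul]
    rw [h1, diagMul E hidem]
    exact Finset.sum_congr rfl fun i _ => by rw [List.map_cons, List.prod_cons]

/-- A submodule invariant under `B` is invariant under products of `B - v • 1`. -/
lemma listProdMem (B : Module.End 𝕜 V) (U : Submodule 𝕜 V)
    (hU : ∀ x ∈ U, B x ∈ U) (l : List 𝕜) :
    ∀ x ∈ U, (l.map fun v => B - v • 1).prod x ∈ U := by
  induction l with
  | nil => intro x hx; simpa using hx
  | cons a l IH =>
    intro x hx
    rw [List.map_cons, List.prod_cons, Module.End.mul_apply]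
    have h1 := IH x hx
    have h2 : (B - a • 1) ((l.map fun v => B - v • 1).prod x)
        = B ((l.map fun v => B - v • 1).prod x) - a • ((l.map fun v => B - v • 1).prod x) := by
      simp [LinearMap.sub_apply]
    rw [h2]
    exact Submodule.sub_mem U (hU _ h1) (Submodule.smul_mem U a h1)

/-- A rank-one nonvanishing lemma: if `B * C ≠ 0`, `C` has rank one and `C x ≠ 0`
then `B (C x) ≠ 0`. -/
lemma rankOneApply (B C : Module.End 𝕜 V)
    (hC : Module.finrank 𝕜 (LinearMap.range C) = 1)
    (hBC : B * C ≠ 0) {x : V} (hx : C x ≠ 0) : B (C x) ≠ 0 := by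
  obtain ⟨u, hu⟩ : ∃ u, B (C u) ≠ 0 := by
    by_contra h
    push_neg at h
    exact hBC (LinearMap.ext fun u => by simpa [Module.End.mul_apply] using h u)
  have hne : (⟨C x, LinearMap.mem_range_self C x⟩ : LinearMap.range C) ≠ 0 := by
    simpa [Submodule.mk_eq_zero] using hx
  obtain ⟨c, hc⟩ := (finrank_eq_one_iff_of_nonzero' _ hne).mp hC
    ⟨C u, LinearMap.mem_range_self C u⟩
  have hval : c • C x = C u := congrArg Subtype.val hc
  intro h0
  apply hu
  rw [← hval, map_smul, h0, smul_zero]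

/-- The descent lemma: an `A`-invariant subspace annihilated by `Estar 0` is zero. -/
lemma descent {d : ℕ} [FiniteDimensional 𝕜 V] (A : Module.End 𝕜 V)
    (Estar : Fin (d + 1) → Module.End 𝕜 V)
    (hidem : ∀ i j, Estar i * Estar j = if i = j then Estar i else 0)
    (hrank : ∀ i, Module.finrank 𝕜 (LinearMap.range (Estar i)) = 1)
    (htri : ∀ i j : Fin (d + 1), 1 < |((i : ℕ) : ℤ) - ((j : ℕ) : ℤ)| → Estar i * A * Estar j = 0)
    (hirr : ∀ i j : Fin (d + 1), |((i : ℕ) : ℤ) - ((j : ℕ) : ℤ)| = 1 → Estar i * A * Estar j ≠ 0)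
    (hone : ∑ i, Estar i = 1)
    (U : Submodule 𝕜 V) (hUA : ∀ x ∈ U, A x ∈ U)
    (h0 : ∀ x ∈ U, Estar 0 x = 0) : ∀ x ∈ U, x = 0 := by
  classical
  have key : ∀ k : ℕ, ∀ m : Fin (d + 1), (m : ℕ) = k → ∀ x ∈ U, Estar m x = 0 := by
    intro k
    induction k using Nat.strong_induction_on with
    | _ k IH =>
      intro m hm x hx
      rcases Nat.eq_zero_or_pos (m : ℕ) with h0m | h0m
      · have hm0 : m = 0 := Fin.ext (by simpa using h0m)
        rw [hm0]; exact h0 x hx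
      · by_contra hnz
        have hm1 : (m : ℕ) - 1 < d + 1 := by omega
        set m' : Fin (d + 1) := ⟨(m : ℕ) - 1, hm1⟩ with hm'
        have hAx : Estar m' (A x) = Estar m' (A (Estar m x)) := by
          have hx1 : A x = ∑ j, A (Estar j x) := by
            have h1 : (∑ j, Estar j) x = x := by rw [hone]; rfl
            rw [LinearMap.sum_apply] at h1
            conv_lhs => rw [← h1]
            rw [map_sum]
          rw [hx1, map_sum]
          refine Finset.sum_eq_single m (fun j _ hj => ?_) (by simp)
          have hjm : (j : ℕ) ≠ (m : ℕ) := fun h => hj (Fin.ext h)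
          rcases lt_or_gt_of_ne hjm with hlt | hgt
          · have : Estar j x = 0 := IH (j : ℕ) (by omega) j rfl x hx
            rw [this, map_zero, map_zero]
          · have hz : Estar m' * A * Estar j = 0 := by
              apply htri
              have hval : (m' : ℕ) = (m : ℕ) - 1 := rfl
              rw [hval, lt_abs]
              omega
            have := DFunLike.congr_fun hz x
            simpa [Module.End.mul_apply] using this
        have hne : Estar m' (A (Estar m x)) ≠ 0 := by
          have hBC : (Estar m' * A) * Estar m ≠ 0 := by
            have h1 := hirr m' m (by
              have hval : (m' : ℕ) = (m : ℕ) - 1 := rfl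
              rw [hval, abs_eq (by norm_num : (0:ℤ) ≤ 1)]
              omega)
            simpa [mul_assoc] using h1
          have := rankOneApply (Estar m' * A) (Estar m) (hrank m) hBC hnz
          simpa [Module.End.mul_apply] using this
        have hz2 : Estar m' (A x) = 0 :=
          IH ((m : ℕ) - 1) (by omega) m' rfl (A x) (hUA x hx)
        rw [hAx] at hz2
        exact hne hz2
  intro x hx
  have h1 : (∑ i, Estar i) x = x := by rw [hone]; rfl
  rw [LinearMap.sum_apply] at h1
  rw [← h1]
  exact Finset.sum_eq_zero fun i _ => key (i : ℕ) i rfl x hx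

end Helpers

/-- If θ*ᵢ ≠ θ*₀ for 1 ≤ i ≤ d, then the graph Δ is connected. -/
theorem stmt_7 {𝕜 : Type*} [Field 𝕜] {V : Type*} [AddCommGroup V] [Module 𝕜 V]
    [FiniteDimensional 𝕜 V] {d : ℕ} (hdim : Module.finrank 𝕜 V = d + 1)
    (A : Module.End 𝕜 V)
    (Estar : Fin (d + 1) → Module.End 𝕜 V)
    (hidem : ∀ i j, Estar i * Estar j = if i = j then Estar i else 0)
    (hrank : ∀ i, Module.finrank 𝕜 (LinearMap.range (Estar i)) = 1)
    (htri : ∀ i j : Fin (d + 1), 1 < |((i : ℕ) : ℤ) - ((j : ℕ) : ℤ)| → Estar i * A * Estar j = 0)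
    (hirr : ∀ i j : Fin (d + 1), |((i : ℕ) : ℤ) - ((j : ℕ) : ℤ)| = 1 → Estar i * A * Estar j ≠ 0)
    (hd : 1 ≤ d)
    (θ : Fin (d + 1) → 𝕜) (hθ : Function.Injective θ)
    (E : Fin (d + 1) → Module.End 𝕜 V)
    (hEidem : ∀ i j, E i * E j = if i = j then E i else 0)
    (hErank : ∀ i, Module.finrank 𝕜 (LinearMap.range (E i)) = 1)
    (hA : A = ∑ i, θ i • E i)
    (θstar : Fin (d + 1) → 𝕜)
    (Astar : Module.End 𝕜 V) (hAstar : Astar = ∑ i, θstar i • Estar i)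
    (hts : ∀ i : Fin (d + 1), i ≠ 0 → θstar i ≠ θstar 0) :
    (SimpleGraph.fromRel (fun i j : Fin (d + 1) => E i * Astar * E j ≠ 0)).Connected := by
  classical
  set G := SimpleGraph.fromRel (fun i j : Fin (d + 1) => E i * Astar * E j ≠ 0) with hG
  rw [SimpleGraph.connected_iff]
  refine ⟨?_, ⟨0⟩⟩
  intro u v
  by_contra hnr
  have honeE : ∑ i, E i = 1 := sumIdemOne hdim E hEidem hErank
  have honeS : ∑ i, Estar i = 1 := sumIdemOne hdim Estar hidem hrank
  have horthE := orthApply E hEidem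
  have hidE := idemApply E hEidem
  set q : Fin (d + 1) → Prop := fun i => G.Reachable u i with hq
  have hqu : q u := by simp only [hq]; exact SimpleGraph.Reachable.refl u
  have hnqv : ¬ q v := hnr
  have hcut : ∀ i j, q i → ¬ q j → E i * Astar * E j = 0 ∧ E j * Astar * E i = 0 := by
    intro i j hi hj
    have hne : i ≠ j := fun h => hj (h ▸ hi)
    have hadj : ¬ G.Adj i j := fun h => hj (hi.trans h.reachable)
    rw [hG] at hadj
    constructor
    · by_contra hR
      exact hadj ((SimpleGraph.fromRel_adj _ i j).mpr ⟨hne, Or.inl hR⟩)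
    · by_contra hR
      exact hadj ((SimpleGraph.fromRel_adj _ i j).mpr ⟨hne, Or.inr hR⟩)
  set W : Submodule 𝕜 V := ⨆ i, ⨆ (_ : q i), LinearMap.range (E i) with hW
  set W' : Submodule 𝕜 V := ⨆ i, ⨆ (_ : ¬ q i), LinearMap.range (E i) with hW'
  have hmemW : ∀ j, q j → LinearMap.range (E j) ≤ W := by
    intro j hj
    rw [hW]
    exact le_iSup₂ (f := fun i (_ : q i) => LinearMap.range (E i)) j hj
  have hmemW' : ∀ j, ¬ q j → LinearMap.range (E j) ≤ W' := by
    intro j hj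
    rw [hW']
    exact le_iSup₂ (f := fun i (_ : ¬ q i) => LinearMap.range (E i)) j hj
  have hAact : ∀ j w, A (E j w) = θ j • E j w := by
    intro j w
    rw [hA, LinearMap.sum_apply]
    rw [Finset.sum_eq_single j (fun i _ hij => by
      simp [LinearMap.smul_apply, horthE i j hij w]) (by simp)]
    simp [hidE j w]
  have hAinv : ∀ (p : Fin (d + 1) → Prop) (x : V),
      x ∈ (⨆ i, ⨆ (_ : p i), LinearMap.range (E i) : Submodule 𝕜 V) →
      A x ∈ (⨆ i, ⨆ (_ : p i), LinearMap.range (E i) : Submodule 𝕜 V) := by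
    intro p x hx
    refine mapInto E p A _ (fun j hj w => ?_) hx
    rw [hAact j w]
    exact (le_iSup₂ (f := fun i (_ : p i) => LinearMap.range (E i)) j hj)
      (Submodule.smul_mem _ _ ⟨w, rfl⟩)
  have hWA : ∀ x ∈ W, A x ∈ W := by
    intro x hx
    rw [hW] at hx ⊢
    exact hAinv q x hx
  have hW'A : ∀ x ∈ W', A x ∈ W' := by
    intro x hx
    rw [hW'] at hx ⊢
    exact hAinv (fun i => ¬ q i) x hx
  have hstep : ∀ (p : Fin (d + 1) → Prop),
      (∀ i j, ¬ p i → p j → E i * Astar * E j = 0) →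
      ∀ x ∈ (⨆ i, ⨆ (_ : p i), LinearMap.range (E i) : Submodule 𝕜 V),
        Astar x ∈ (⨆ i, ⨆ (_ : p i), LinearMap.range (E i) : Submodule 𝕜 V) := by
    intro p hp x hx
    refine mapInto E p Astar _ (fun j hj w => ?_) hx
    have h1 : Astar (E j w) = ∑ i, E i (Astar (E j w)) := by
      conv_lhs => rw [show Astar (E j w) = (1 : Module.End 𝕜 V) (Astar (E j w)) from rfl,
        ← honeE]
      rw [LinearMap.sum_apply]
    rw [h1]
    refine Submodule.sum_mem _ fun i _ => ?_
    by_cases hpi : p i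
    · exact (le_iSup₂ (f := fun i (_ : p i) => LinearMap.range (E i)) i hpi) ⟨_, rfl⟩
    · have hz := hp i j hpi hj
      have h2 : E i (Astar (E j w)) = 0 := by
        have := DFunLike.congr_fun hz w
        simpa [Module.End.mul_apply] using this
      rw [h2]
      exact Submodule.zero_mem _
  have hWAs : ∀ x ∈ W, Astar x ∈ W := by
    intro x hx
    rw [hW] at hx ⊢
    exact hstep q (fun i j hi hj => (hcut j i hj hi).2) x hx
  have hW'As : ∀ x ∈ W', Astar x ∈ W' := by
    intro x hx
    rw [hW'] at hx ⊢
    exact hstep (fun i => ¬ q i) (fun i j hi hj => (hcut i j (not_not.mp hi) hj).1) x hx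
  -- The projection Estar 0 preserves any Astar-invariant subspace
  set l : List 𝕜 := ((Finset.univ.erase (0 : Fin (d + 1))).toList).map θstar with hl
  have hc : (l.map fun v => θstar 0 - v).prod ≠ 0 := by
    refine List.prod_ne_zero fun h0 => ?_
    rw [List.mem_map] at h0
    obtain ⟨w, hwl, hw0⟩ := h0
    rw [hl, List.mem_map] at hwl
    obtain ⟨j, hj, rfl⟩ := hwl
    have hj0 : j ≠ 0 := (Finset.mem_erase.mp (Finset.mem_toList.mp hj)).1
    exact hts j hj0 (sub_eq_zero.mp hw0).symm
  have hcollapse : (l.map fun v => Astar - v • 1).prod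
      = (l.map fun v => θstar 0 - v).prod • Estar 0 := by
    rw [listDiag Estar hidem honeS θstar Astar hAstar l]
    refine Finset.sum_eq_single 0 (fun i _ hi => ?_) (by simp)
    have hz : (l.map fun v => θstar i - v).prod = 0 := by
      apply List.prod_eq_zero
      rw [List.mem_map]
      refine ⟨θstar i, ?_, sub_self _⟩
      rw [hl, List.mem_map]
      exact ⟨i, Finset.mem_toList.mpr (Finset.mem_erase.mpr ⟨hi, Finset.mem_univ i⟩), rfl⟩
    rw [hz, zero_smul]
  have hE0mem : ∀ (U : Submodule 𝕜 V), (∀ x ∈ U, Astar x ∈ U) →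
      ∀ x ∈ U, Estar 0 x ∈ U := by
    intro U hU x hx
    have h1 := listProdMem Astar U hU l x hx
    rw [hcollapse] at h1
    have h2 : ((l.map fun v => θstar 0 - v).prod • Estar 0) x
        = (l.map fun v => θstar 0 - v).prod • (Estar 0 x) := rfl
    rw [h2] at h1
    have h3 : Estar 0 x = ((l.map fun v => θstar 0 - v).prod)⁻¹ •
        ((l.map fun v => θstar 0 - v).prod • (Estar 0 x)) := by
      rw [smul_smul, inv_mul_cancel₀ hc, one_smul]
    rw [h3]
    exact Submodule.smul_mem _ _ h1
  -- W and W' intersect trivially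
  have hdisj : ∀ x, x ∈ W → x ∈ W' → x = 0 := by
    intro x hxW hxW'
    set PS : Module.End 𝕜 V := ∑ i ∈ Finset.univ.filter q, E i with hPS
    have h1 : PS x = x := by
      have h0 : (PS - 1) x ∈ (⊥ : Submodule 𝕜 V) := by
        rw [hW] at hxW
        refine mapInto E q _ ⊥ (fun j hj w => ?_) hxW
        have hPSj : PS (E j w) = E j w := by
          rw [hPS, LinearMap.sum_apply]
          rw [Finset.sum_eq_single_of_mem j (Finset.mem_filter.mpr ⟨Finset.mem_univ j, hj⟩)
            (fun i _ hij => horthE i j hij w)]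
          exact hidE j w
        simp [LinearMap.sub_apply, hPSj]
      simpa [sub_eq_zero] using h0
    have h2 : PS x = 0 := by
      have h0 : PS x ∈ (⊥ : Submodule 𝕜 V) := by
        rw [hW'] at hxW'
        refine mapInto E (fun i => ¬ q i) PS ⊥ (fun j hj w => ?_) hxW'
        rw [hPS, LinearMap.sum_apply]
        simp only [Submodule.mem_bot]
        refine Finset.sum_eq_zero fun i hi => ?_
        have hqi : q i := (Finset.mem_filter.mp hi).2
        exact horthE i j (fun h => hj (h ▸ hqi)) w
      simpa using h0
    rw [← h1, h2]
  -- nonzero vectors in W and W'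
  have hExist : ∀ i : Fin (d + 1), ∃ y, E i y ≠ 0 := by
    intro i
    by_contra h
    push_neg at h
    have hb : LinearMap.range (E i) = ⊥ := by
      rw [LinearMap.range_eq_bot]
      exact LinearMap.ext fun y => h y
    have hr := hErank i
    rw [hb] at hr
    simp at hr
  obtain ⟨yu, hyu⟩ := hExist u
  obtain ⟨yv, hyv⟩ := hExist v
  have hwu : E u yu ∈ W := hmemW u hqu ⟨yu, rfl⟩
  have hwv : E v yv ∈ W' := hmemW' v hnqv ⟨yv, rfl⟩
  -- dichotomy: Estar 0 kills W or W'
  have hor : (∀ x ∈ W, Estar 0 x = 0) ∨ (∀ x ∈ W', Estar 0 x = 0) := by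
    by_contra h
    push_neg at h
    obtain ⟨⟨w, hwW, hw0⟩, ⟨w', hw'W, hw'0⟩⟩ := h
    have hne : (⟨Estar 0 w, LinearMap.mem_range_self _ w⟩ :
        LinearMap.range (Estar 0)) ≠ 0 := by
      simpa [Submodule.mk_eq_zero] using hw0
    obtain ⟨c0, hc0⟩ := (finrank_eq_one_iff_of_nonzero' _ hne).mp (hrank 0)
      ⟨Estar 0 w', LinearMap.mem_range_self _ w'⟩
    have hval : c0 • Estar 0 w = Estar 0 w' := congrArg Subtype.val hc0
    have hinW : Estar 0 w' ∈ W := by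
      rw [← hval]
      exact Submodule.smul_mem _ _ (hE0mem W hWAs w hwW)
    have hinW' : Estar 0 w' ∈ W' := hE0mem W' hW'As w' hw'W
    exact hw'0 (hdisj _ hinW hinW')
  rcases hor with h | h
  · have hzero := descent A Estar hidem hrank htri hirr honeS W hWA h
    exact hyu (hzero _ hwu)
  · have hzero := descent A Estar hidem hrank htri hirr honeS W' hW'A h
    exact hyv (hzero _ hwv)
end

section
/- Let β_0,…,β_{d−1} denote nonzero scalars in 𝕜. Then there exists a feasible basis of V with respect to which the matrix representing A has (i,i+1)-entry β_i for 0 ≤ i ≤ d−1. -/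
/-!
Choose a nonzero vector in each line `E*ᵢV`; since the `E*ᵢ` are orthogonal idempotents these
vectors are independent, hence a basis, and `E*ᵢ` acts as the `i`-th coordinate projection. Then
`E*ᵢ A E*ⱼ x` is the `(i, j)`-entry of `A` times the `j`-th coordinate of `x` times `vᵢ`, so the
entries `(i, i+1)` are nonzero. Rescaling `vᵢ` by `cᵢ` multiplies the `(i, j)`-entry by
`cᵢ⁻¹ cⱼ`, and the partial products of `βᵢ / Aᵢ,ᵢ₊₁` give the scalars making the superdiagonal `β`.
-/

open Module

section Rescaling

variable {R M ι : Type*} [CommRing R] [AddCommGroup M] [Module R M] [Fintype ι] [DecidableEq ι]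

theorem LinearMap.toMatrix_unitsSMul_apply (b : Basis ι R M) (u : ι → Rˣ) (f : Module.End R M)
    (i j : ι) :
    LinearMap.toMatrix (b.unitsSMul u) (b.unitsSMul u) f i j =
      ↑(u i)⁻¹ * u j * LinearMap.toMatrix b b f i j := by
  simp only [LinearMap.toMatrix_apply, Basis.repr_unitsSMul, Basis.unitsSMul_apply,
    Units.smul_def, map_smul, Finsupp.smul_apply, smul_eq_mul]
  ring

end Rescaling

section Superdiagonal

variable {K V : Type*} [Field K] [AddCommGroup V] [Module K V]

theorem Module.Basis.exists_unitsSMul_toMatrix_superdiag_eq {n : ℕ} (b : Basis (Fin (n + 1)) K V)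
    (f : Module.End K V) (hf : ∀ i : Fin n, LinearMap.toMatrix b b f i.castSucc i.succ ≠ 0)
    (β : Fin n → K) (hβ : ∀ i, β i ≠ 0) :
    ∃ u : Fin (n + 1) → Kˣ, ∀ i : Fin n,
      LinearMap.toMatrix (b.unitsSMul u) (b.unitsSMul u) f i.castSucc i.succ = β i := by
  refine ⟨Fin.partialProd fun i ↦ Units.mk0 (β i) (hβ i) / Units.mk0 _ (hf i), fun i ↦ ?_⟩
  rw [LinearMap.toMatrix_unitsSMul_apply, Fin.partialProd_succ]
  simp [hf i]

end Superdiagonal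

namespace OrthogonalIdempotents

variable {ι : Type*} [DecidableEq ι]

section Semiring

variable {R M : Type*} [Semiring R] [AddCommMonoid M] [Module R M] {e : ι → Module.End R M}

theorem apply_of_mem_range (he : OrthogonalIdempotents e) {i j : ι} {x : M}
    (hx : x ∈ LinearMap.range (e j)) : e i x = if i = j then x else 0 := by
  obtain ⟨y, rfl⟩ := hx
  rw [← Module.End.mul_apply, he.mul_eq]
  split_ifs with h
  · rw [h]
  · rfl

end Semiring

section DivisionRing

variable {K V : Type*} [DivisionRing K] [AddCommGroup V] [Module K V] {e : ι → Module.End K V}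

theorem linearIndependent_of_mem_range (he : OrthogonalIdempotents e) {v : ι → V}
    (hv : ∀ i, v i ∈ LinearMap.range (e i)) (hv₀ : ∀ i, v i ≠ 0) : LinearIndependent K v := by
  rw [linearIndependent_iff']
  intro s g hg i hi
  have hproj : e i (∑ j ∈ s, g j • v j) = g i • v i := by
    simp [map_sum, he.apply_of_mem_range (hv _), hi]
  rw [hg, map_zero, eq_comm, smul_eq_zero] at hproj
  exact hproj.resolve_right (hv₀ i)

theorem exists_basis_mem_range [Fintype ι] [Nonempty ι] (he : OrthogonalIdempotents e)
    (hcard : Fintype.card ι = finrank K V) (hne : ∀ i, LinearMap.range (e i) ≠ ⊥) :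
    ∃ b : Basis ι K V, ∀ i, b i ∈ LinearMap.range (e i) := by
  choose v hv hv₀ using fun i ↦ Submodule.exists_mem_ne_zero_of_ne_bot (hne i)
  refine ⟨basisOfLinearIndependentOfCardEqFinrank (he.linearIndependent_of_mem_range hv hv₀) hcard,
    fun i ↦ ?_⟩
  rw [coe_basisOfLinearIndependentOfCardEqFinrank]
  exact hv i

end DivisionRing

section CommRing

variable {R M : Type*} [CommRing R] [AddCommGroup M] [Module R M] {e : ι → Module.End R M}

theorem eq_coord_smulRight (he : OrthogonalIdempotents e) (b : Basis ι R M)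
    (hb : ∀ i, b i ∈ LinearMap.range (e i)) (j : ι) :
    e j = (b.coord j).smulRight (b j) :=
  b.ext fun k ↦ by
    rw [he.apply_of_mem_range (hb k)]
    by_cases h : j = k <;> simp [h]

theorem mul_mul_apply [Fintype ι] (he : OrthogonalIdempotents e) (b : Basis ι R M)
    (hb : ∀ i, b i ∈ LinearMap.range (e i)) (A : Module.End R M) (i j : ι) (x : M) :
    (e i * A * e j) x = (b.repr x j * LinearMap.toMatrix b b A i j) • b i := by
  simp [he.eq_coord_smulRight b hb, LinearMap.toMatrix_apply, smul_smul]

theorem toMatrix_ne_zero [Fintype ι] (he : OrthogonalIdempotents e) (b : Basis ι R M)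
    (hb : ∀ i, b i ∈ LinearMap.range (e i)) {A : Module.End R M} {i j : ι}
    (h : e i * A * e j ≠ 0) : LinearMap.toMatrix b b A i j ≠ 0 := by
  contrapose! h
  ext x
  simp [he.mul_mul_apply b hb, h]

end CommRing

end OrthogonalIdempotents

/-- Given nonzero scalars β₀,…,β_{d−1}, there is a feasible basis with respect to which
the matrix representing A has (i,i+1)-entry βᵢ. -/
theorem stmt_11 {𝕜 : Type*} [Field 𝕜] {V : Type*} [AddCommGroup V] [Module 𝕜 V]
    {d : ℕ} (hdim : Module.finrank 𝕜 V = d + 1)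
    (A : Module.End 𝕜 V)
    (Estar : Fin (d + 1) → Module.End 𝕜 V)
    (hidem : ∀ i j, Estar i * Estar j = if i = j then Estar i else 0)
    (hrank : ∀ i, Module.finrank 𝕜 (LinearMap.range (Estar i)) = 1)
    (hirr : ∀ i j : Fin (d + 1), |((i : ℕ) : ℤ) - ((j : ℕ) : ℤ)| = 1 → Estar i * A * Estar j ≠ 0)
    (β : ℕ → 𝕜) (hβ : ∀ i, i < d → β i ≠ 0) :
    ∃ w : Module.Basis (Fin (d + 1)) 𝕜 V,
      (∀ i, w i ∈ LinearMap.range (Estar i)) ∧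
      ∀ (i : ℕ) (h : i < d),
        LinearMap.toMatrix w w A ⟨i, by omega⟩ ⟨i + 1, by omega⟩ = β i := by
  have he : OrthogonalIdempotents Estar := OrthogonalIdempotents.iff_mul_eq.mpr hidem
  obtain ⟨b, hb⟩ := he.exists_basis_mem_range (by simp [hdim]) fun i hi ↦ by
    have h := hrank i
    rw [hi, finrank_bot] at h
    exact zero_ne_one h
  obtain ⟨u, hu⟩ := b.exists_unitsSMul_toMatrix_superdiag_eq A
    (fun i ↦ he.toMatrix_ne_zero b hb (hirr _ _ (by simp))) (fun i ↦ β i) fun i ↦ hβ i i.isLt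
  refine ⟨b.unitsSMul u, fun i ↦ ?_, fun i hi ↦ hu ⟨i, hi⟩⟩
  rw [Basis.unitsSMul_apply]
  exact Submodule.smul_mem _ _ (hb i)
end

section
/- The polynomial u_{d+1} is the characteristic polynomial of A; that is, u_{d+1}(λ) = Π_{i=0}^d (λ − θ_i). -/
open Polynomial Finset

/-!
An eigenvector of `A` for `θ i` exists because `E i ≠ 0`. Its coordinates `w k` in the basis `v`
satisfy the same three-term recurrence as the values `(u k).eval (θ i)`, and since every `b k` is
nonzero such a solution is determined by its first term: `w k = w 0 * (u k).eval (θ i)` with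
`w 0 ≠ 0`. Comparing the last row of the matrix with the recurrence defining `u (d + 1)` gives
`(u (d + 1)).eval (θ i) = 0`. Finally `u (d + 1)` is monic of degree `d + 1`, its leading
coefficient being `∏ b h` divided by itself, so its `d + 1` distinct roots `θ i` determine it.
-/

theorem Polynomial.eq_prod_X_sub_C_of_monic {K ι : Type*} [Field K] [Fintype ι] {p : K[X]}
    {θ : ι → K} (hθ : Function.Injective θ) (hp : p.Monic) (hdeg : p.natDegree = Fintype.card ι)
    (hroot : ∀ i, p.eval (θ i) = 0) : p = ∏ i, (X - C (θ i)) := by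
  have hmonic : (∏ i, (X - C (θ i))).Monic := monic_prod_of_monic _ _ fun i _ => monic_X_sub_C _
  refine eq_of_monic_of_dvd_of_natDegree_le hmonic hp ?_ ?_
  · exact Fintype.prod_dvd_of_coprime (pairwise_coprime_X_sub_C hθ)
      fun i => dvd_iff_isRoot.mpr (hroot i)
  · rw [natDegree_prod_of_monic _ _ fun i _ => monic_X_sub_C _, hdeg]
    simp

theorem Module.End.hasEigenvalue_of_eq_sum_smul {R V ι : Type*} [CommRing R] [AddCommGroup V]
    [Module R V] [Fintype ι] [DecidableEq ι] {A : End R V} {θ : ι → R} {E : ι → End R V}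
    (hE : ∀ i j, E i * E j = if i = j then E i else 0) (hA : A = ∑ j, θ j • E j) {i : ι}
    (hEi : E i ≠ 0) : A.HasEigenvalue (θ i) := by
  obtain ⟨y, hy⟩ : ∃ y, E i y ≠ 0 := by
    by_contra! h
    exact hEi (LinearMap.ext h)
  have hAE : A * E i = θ i • E i := by simp [hA, sum_mul, hE]
  refine hasEigenvalue_of_hasEigenvector ⟨mem_eigenspace_iff.mpr ?_, hy⟩
  rw [← Module.End.mul_apply, hAE, LinearMap.smul_apply]

-- At `i = 0` the truncated `i - 1` turns `c 0 * f (i - 1)` into `c 0 * f 0`;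
-- `c 0 = 0` kills it.
theorem sum_tridiagonal_row_mul {K : Type*} [CommRing K] (a b c f : ℕ → K) {n i : ℕ} (hi : i < n)
    (hc0 : c 0 = 0) (hf : f n = 0) :
    ∑ j ∈ range n, (if i = j then a i else if i + 1 = j then b i
      else if j + 1 = i then c i else 0) * f j = c i * f (i - 1) + a i * f i + b i * f (i + 1) := by
  have hsplit : ∀ j, (if i = j then a i else if i + 1 = j then b i
      else if j + 1 = i then c i else 0) * f j =
      (if i = j then a i * f j else 0) + (if i + 1 = j then b i * f j else 0) +
        (if j + 1 = i then c i * f j else 0) := by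
    intro j
    split_ifs <;> first | omega | ring
  simp only [hsplit, sum_add_distrib, sum_ite_eq, mem_range, if_pos hi]
  have hsuper : (if i + 1 < n then b i * f (i + 1) else 0) = b i * f (i + 1) := by
    split_ifs with h
    · rfl
    · rw [show i + 1 = n by omega, hf, mul_zero]
  have hsub : (∑ j ∈ range n, if j + 1 = i then c i * f j else 0) = c i * f (i - 1) := by
    rcases i with _ | i
    · simp [hc0]
    · simp only [Nat.add_right_cancel_iff, sum_ite_eq', mem_range, Nat.add_sub_cancel,
        if_pos (Nat.lt_of_succ_lt hi)]
  rw [hsuper, hsub]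
  ring

section ThreeTermRecurrence

variable {K : Type*} [Field K]

theorem natDegree_le_and_coeff_of_X_mul_eq {p q r : K[X]} {α β γ : K} {n : ℕ} (hβ : β ≠ 0)
    (h : X * q = C γ * p + C α * q + C β * r) (hp : p.natDegree ≤ n) (hq : q.natDegree ≤ n) :
    r.natDegree ≤ n + 1 ∧ r.coeff (n + 1) = β⁻¹ * q.coeff n := by
  have hr : r = C β⁻¹ * (X * q - C γ * p - C α * q) := by
    rw [show X * q - C γ * p - C α * q = C β * r by linear_combination h, ← mul_assoc, ← C_mul,
      inv_mul_cancel₀ hβ, C_1, one_mul]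
  constructor
  · have hXq : (X * q).natDegree ≤ n + 1 :=
      natDegree_mul_le.trans (by have := natDegree_X_le (R := K); omega)
    have hp' : (C γ * p).natDegree ≤ n + 1 := (natDegree_C_mul_le _ _).trans (by omega)
    have hq' : (C α * q).natDegree ≤ n + 1 := (natDegree_C_mul_le _ _).trans (by omega)
    rw [hr]
    exact (natDegree_C_mul_le _ _).trans
      ((natDegree_sub_le_of_le (natDegree_sub_le_of_le hXq hp') hq').trans (by simp))
  · rw [hr, coeff_C_mul, coeff_sub, coeff_sub, coeff_X_mul, coeff_C_mul, coeff_C_mul,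
      coeff_eq_zero_of_natDegree_lt (by omega : p.natDegree < n + 1),
      coeff_eq_zero_of_natDegree_lt (by omega : q.natDegree < n + 1)]
    ring

variable {a b c : ℕ → K} {n : ℕ}

theorem natDegree_le_and_coeff_of_recurrence {u : ℕ → K[X]} (hu0 : u 0 = 1)
    (hu : ∀ i < n, X * u i = C (c i) * u (i - 1) + C (a i) * u i + C (b i) * u (i + 1))
    (hb : ∀ i < n, b i ≠ 0) {k : ℕ} (hk : k ≤ n) :
    (u k).natDegree ≤ k ∧ (u k).coeff k = (∏ h ∈ range k, b h)⁻¹ := by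
  induction k using Nat.strong_induction_on with
  | _ k ih =>
    rcases k with _ | i
    · simp [hu0]
    · obtain ⟨hprev, -⟩ := ih (i - 1) (by omega) (by omega)
      obtain ⟨hcur, hcoeff⟩ := ih i (by omega) (by omega)
      obtain ⟨hdeg, hlead⟩ := natDegree_le_and_coeff_of_X_mul_eq (hb i (by omega)) (hu i (by omega))
        (hprev.trans (Nat.sub_le i 1)) hcur
      rw [hlead, hcoeff, prod_range_succ, mul_inv, mul_comm]
      exact ⟨hdeg, rfl⟩

theorem eq_of_recurrence {x y : ℕ → K} {θ : K}
    (hx : ∀ i < n, θ * x i = c i * x (i - 1) + a i * x i + b i * x (i + 1))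
    (hy : ∀ i < n, θ * y i = c i * y (i - 1) + a i * y i + b i * y (i + 1))
    (hb : ∀ i < n, b i ≠ 0) (h0 : x 0 = y 0) {k : ℕ} (hk : k ≤ n) : x k = y k := by
  induction k using Nat.strong_induction_on with
  | _ k ih =>
    rcases k with _ | i
    · exact h0
    · have hprev := ih (i - 1) (by omega) (by omega)
      have hcur := ih i (by omega) (by omega)
      have := hx i (by omega)
      rw [hprev, hcur, hy i (by omega)] at this
      exact (mul_left_cancel₀ (hb i (by omega)) (by linear_combination this)).symm

theorem eval_eq_zero_of_recurrence {u : ℕ → K[X]} {β θ : K} {w : ℕ → K} (hu0 : u 0 = 1)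
    (hu : ∀ i < n, X * u i = C (c i) * u (i - 1) + C (a i) * u i + C (b i) * u (i + 1))
    (hun : X * u n = C (c n) * u (n - 1) + C (a n) * u n + C β * u (n + 1))
    (hb : ∀ i < n, b i ≠ 0) (hβ : β ≠ 0)
    (hw : ∀ i ≤ n, θ * w i = c i * w (i - 1) + a i * w i + b i * w (i + 1))
    (hwn : w (n + 1) = 0) (hw0 : ∃ k ≤ n, w k ≠ 0) : (u (n + 1)).eval θ = 0 := by
  have hu_eval : ∀ i, X * u i = C (c i) * u (i - 1) + C (a i) * u i + C (b i) * u (i + 1) →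
      θ * (w 0 * (u i).eval θ) = c i * (w 0 * (u (i - 1)).eval θ) +
        a i * (w 0 * (u i).eval θ) + b i * (w 0 * (u (i + 1)).eval θ) := by
    intro i hi
    have := congrArg (eval θ) hi
    simp only [eval_mul, eval_X, eval_add, eval_C] at this
    linear_combination w 0 * this
  have hw_eq : ∀ k ≤ n, w k = w 0 * (u k).eval θ := fun k hk =>
    eq_of_recurrence (fun i hi => hw i hi.le) (fun i hi => hu_eval i (hu i hi)) hb
      (by simp [hu0]) hk
  obtain ⟨k, hk, hwk⟩ := hw0
  have hw0_ne : w 0 ≠ 0 := fun h => hwk (by rw [hw_eq k hk, h, zero_mul])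
  have hlast := congrArg (eval θ) hun
  simp only [eval_mul, eval_X, eval_add, eval_C] at hlast
  have hrow := hw n le_rfl
  rw [hwn, mul_zero, add_zero, hw_eq n le_rfl, hw_eq (n - 1) (Nat.sub_le n 1)] at hrow
  have : w 0 * β * (u (n + 1)).eval θ = 0 := by linear_combination hrow - w 0 * hlast
  exact (mul_eq_zero.mp this).resolve_left (mul_ne_zero hw0_ne hβ)

theorem monic_and_natDegree_of_recurrence {u : ℕ → K[X]} (hu0 : u 0 = 1)
    (hu : ∀ i < n, X * u i = C (c i) * u (i - 1) + C (a i) * u i + C (b i) * u (i + 1))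
    (hun : X * u n = C (c n) * u (n - 1) + C (a n) * u n + C (∏ h ∈ range n, b h)⁻¹ * u (n + 1))
    (hb : ∀ i < n, b i ≠ 0) : (u (n + 1)).Monic ∧ (u (n + 1)).natDegree = n + 1 := by
  have hprod : ∏ h ∈ range n, b h ≠ 0 := prod_ne_zero_iff.mpr fun h hh => hb h (mem_range.mp hh)
  obtain ⟨hdeg, hcoeff⟩ := natDegree_le_and_coeff_of_recurrence hu0 hu hb le_rfl
  obtain ⟨hdeg', -⟩ := natDegree_le_and_coeff_of_recurrence hu0 hu hb (Nat.sub_le n 1)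
  obtain ⟨hdeg_succ, hlead⟩ := natDegree_le_and_coeff_of_X_mul_eq (inv_ne_zero hprod) hun
    (hdeg'.trans (by omega)) hdeg
  rw [hcoeff, inv_inv, mul_inv_cancel₀ hprod] at hlead
  have hnat := natDegree_eq_of_le_of_coeff_ne_zero hdeg_succ (by simp [hlead])
  exact ⟨by rw [Monic, leadingCoeff, hnat, hlead], hnat⟩

end ThreeTermRecurrence


theorem exists_recurrence_solution_of_hasEigenvalue {K V : Type*} [Field K] [AddCommGroup V]
    [Module K V] {n : ℕ} {A : Module.End K V} (v : Module.Basis (Fin (n + 1)) K V) {a b c : ℕ → K}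
    (hM : ∀ i j : Fin (n + 1), LinearMap.toMatrix v v A i j =
      if (i : ℕ) = (j : ℕ) then a i else if (i : ℕ) + 1 = (j : ℕ) then b i
      else if (j : ℕ) + 1 = (i : ℕ) then c i else 0)
    (hc0 : c 0 = 0) {θ : K} (hθ : A.HasEigenvalue θ) :
    ∃ w : ℕ → K, (∀ i ≤ n, θ * w i = c i * w (i - 1) + a i * w i + b i * w (i + 1)) ∧
      w (n + 1) = 0 ∧ ∃ k ≤ n, w k ≠ 0 := by
  obtain ⟨x, hx, hx0⟩ := hθ.exists_hasEigenvector
  set w : ℕ → K := fun k => if h : k < n + 1 then v.repr x ⟨k, h⟩ else 0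
  have hw : ∀ j : Fin (n + 1), w j = v.repr x j := fun j => dif_pos j.isLt
  refine ⟨w, fun i hi => ?_, dif_neg (lt_irrefl _), ?_⟩
  · have hrow := congrFun (LinearMap.toMatrix_mulVec_repr v v A x) ⟨i, by omega⟩
    rw [Module.End.mem_eigenspace_iff.mp hx, map_smul] at hrow
    simp only [Matrix.mulVec, dotProduct, hM, ← hw] at hrow
    rw [Fin.sum_univ_eq_sum_range (fun j => (if i = j then a i else if i + 1 = j then b i
      else if j + 1 = i then c i else 0) * w j), sum_tridiagonal_row_mul a b c w (by omega) hc0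
      (dif_neg (lt_irrefl _))] at hrow
    rw [hrow, Finsupp.smul_apply, smul_eq_mul, ← hw ⟨i, by omega⟩]
  · obtain ⟨k, hk⟩ : ∃ k, v.repr x k ≠ 0 := by
      by_contra! h
      exact hx0 (v.repr.map_eq_zero_iff.mp (Finsupp.ext h))
    exact ⟨k, by omega, by rwa [hw k]⟩

theorem stmt_13_general {𝕜 : Type*} [Field 𝕜] {V : Type*} [AddCommGroup V] [Module 𝕜 V]
    {d : ℕ}
    (A : Module.End 𝕜 V)
    (θ : Fin (d + 1) → 𝕜) (hθ : Function.Injective θ)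
    (E : Fin (d + 1) → Module.End 𝕜 V)
    (hEidem : ∀ i j, E i * E j = if i = j then E i else 0)
    (hErank : ∀ i, Module.finrank 𝕜 (LinearMap.range (E i)) = 1)
    (hA : A = ∑ i, θ i • E i)
    (v : Module.Basis (Fin (d + 1)) 𝕜 V)
    (a b c : ℕ → 𝕜)
    (hM : ∀ i j : Fin (d + 1), LinearMap.toMatrix v v A i j =
      if (i : ℕ) = (j : ℕ) then a i
      else if (i : ℕ) + 1 = (j : ℕ) then b i
      else if (j : ℕ) + 1 = (i : ℕ) then c i else 0)
    (hb : ∀ i, i < d → b i ≠ 0)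
    (hc0 : c 0 = 0)
    (u : ℕ → Polynomial 𝕜) (hu0 : u 0 = 1)
    (hu : ∀ i, i < d → Polynomial.X * u i =
      Polynomial.C (c i) * u (i - 1) + Polynomial.C (a i) * u i + Polynomial.C (b i) * u (i + 1))
    (hud : Polynomial.X * u d =
      Polynomial.C (c d) * u (d - 1) + Polynomial.C (a d) * u d +
        Polynomial.C (∏ h ∈ Finset.range d, b h)⁻¹ * u (d + 1))
    : u (d + 1) = ∏ i : Fin (d + 1), (Polynomial.X - Polynomial.C (θ i)) := by
  have hprod : ∏ h ∈ range d, b h ≠ 0 := prod_ne_zero_iff.mpr fun h hh => hb h (mem_range.mp hh)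
  have hroot : ∀ i, (u (d + 1)).eval (θ i) = 0 := by
    intro i
    have hEi : E i ≠ 0 := by
      intro h
      have := hErank i
      rw [h, LinearMap.range_zero, finrank_bot] at this
      exact zero_ne_one this
    obtain ⟨w, hw, hwd, hw0⟩ := exists_recurrence_solution_of_hasEigenvalue v hM hc0
      (Module.End.hasEigenvalue_of_eq_sum_smul hEidem hA hEi)
    exact eval_eq_zero_of_recurrence hu0 hu hud hb (inv_ne_zero hprod) hw hwd hw0
  obtain ⟨hmonic, hdeg⟩ := monic_and_natDegree_of_recurrence hu0 hu hud hb
  exact eq_prod_X_sub_C_of_monic hθ hmonic (by simpa using hdeg) hroot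

/-- u_{d+1} is the characteristic polynomial of A, namely ∏ᵢ (λ − θᵢ). -/
theorem stmt_13 {𝕜 : Type*} [Field 𝕜] {V : Type*} [AddCommGroup V] [Module 𝕜 V]
    [FiniteDimensional 𝕜 V] {d : ℕ} (hdim : Module.finrank 𝕜 V = d + 1)
    (A : Module.End 𝕜 V)
    (Estar : Fin (d + 1) → Module.End 𝕜 V)
    (hidem : ∀ i j, Estar i * Estar j = if i = j then Estar i else 0)
    (hrank : ∀ i, Module.finrank 𝕜 (LinearMap.range (Estar i)) = 1)
    (htri : ∀ i j : Fin (d + 1), 1 < |((i : ℕ) : ℤ) - ((j : ℕ) : ℤ)| → Estar i * A * Estar j = 0)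
    (hirr : ∀ i j : Fin (d + 1), |((i : ℕ) : ℤ) - ((j : ℕ) : ℤ)| = 1 → Estar i * A * Estar j ≠ 0)
    (hd : 1 ≤ d)
    (θ : Fin (d + 1) → 𝕜) (hθ : Function.Injective θ)
    (E : Fin (d + 1) → Module.End 𝕜 V)
    (hEidem : ∀ i j, E i * E j = if i = j then E i else 0)
    (hErank : ∀ i, Module.finrank 𝕜 (LinearMap.range (E i)) = 1)
    (hA : A = ∑ i, θ i • E i)
    (v : Module.Basis (Fin (d + 1)) 𝕜 V) (hfeas : ∀ i, v i ∈ LinearMap.range (Estar i))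
    (a b c : ℕ → 𝕜)
    (hM : ∀ i j : Fin (d + 1), LinearMap.toMatrix v v A i j =
      if (i : ℕ) = (j : ℕ) then a i
      else if (i : ℕ) + 1 = (j : ℕ) then b i
      else if (j : ℕ) + 1 = (i : ℕ) then c i else 0)
    (ha : ∀ i : Fin (d + 1), a i = LinearMap.trace 𝕜 V (Estar i * A))
    (hb : ∀ i, i < d → b i ≠ 0) (hbd : b d = 0)
    (hc : ∀ i, 0 < i → i ≤ d → c i ≠ 0) (hc0 : c 0 = 0)
    (u : ℕ → Polynomial 𝕜) (hu0 : u 0 = 1)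
    (hu : ∀ i, i < d → Polynomial.X * u i =
      Polynomial.C (c i) * u (i - 1) + Polynomial.C (a i) * u i + Polynomial.C (b i) * u (i + 1))
    (hud : Polynomial.X * u d =
      Polynomial.C (c d) * u (d - 1) + Polynomial.C (a d) * u d +
        Polynomial.C (∏ h ∈ Finset.range d, b h)⁻¹ * u (d + 1))
    : u (d + 1) = ∏ i : Fin (d + 1), (Polynomial.X - Polynomial.C (θ i)) :=
  stmt_13_general A θ hθ E hEidem hErank hA v a b c hM hb hc0 u hu0 hu hud
end

section
/- Fix an integer r with 0 ≤ r ≤ d, and assume that in the graph Δ the vertex r is adjacent to exactly one other vertex. Then a*_r ≠ θ*_0. -/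
open Module LinearMap

section aux
variable {𝕜 : Type*} [Field 𝕜] {V : Type*} [AddCommGroup V] [Module 𝕜 V]
  [FiniteDimensional 𝕜 V] {d : ℕ}

lemma rank_one_apply' (F : Module.End 𝕜 V) (h : Module.finrank 𝕜 (LinearMap.range F) = 1)
    {u : V} (hu : u ∈ LinearMap.range F) (hu0 : u ≠ 0) (x : V) : ∃ c : 𝕜, F x = c • u := by
  have hspan : Submodule.span 𝕜 {u} = LinearMap.range F := by
    apply Submodule.eq_of_le_of_finrank_le (Submodule.span_le.2 (by simpa))
    rw [h, finrank_span_singleton hu0]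
  have : F x ∈ Submodule.span 𝕜 {u} := hspan ▸ LinearMap.mem_range_self F x
  obtain ⟨c, hc⟩ := Submodule.mem_span_singleton.1 this
  exact ⟨c, hc.symm⟩

lemma li_of_orth (F : Fin (d+1) → Module.End 𝕜 V) (v : Fin (d+1) → V)
    (hv : ∀ i j, F i (v j) = if i = j then v j else 0) (h0 : ∀ i, v i ≠ 0) :
    LinearIndependent 𝕜 v := by
  rw [Fintype.linearIndependent_iff]
  intro g hg j
  have := congrArg (F j) hg
  rw [map_sum, map_zero] at this
  simp only [map_smul, hv] at this
  rw [Finset.sum_eq_single j] at this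
  · simp only [if_pos rfl] at this
    exact (smul_eq_zero.mp this).resolve_right (h0 j)
  · intro b _ hb; simp [Ne.symm hb]
  · simp

lemma sum_idem_eq_one' (hdim : Module.finrank 𝕜 V = d + 1)
    (F : Fin (d+1) → Module.End 𝕜 V)
    (hidem : ∀ i j, F i * F j = if i = j then F i else 0)
    (hrank : ∀ i, Module.finrank 𝕜 (LinearMap.range (F i)) = 1) :
    ∑ i, F i = 1 := by
  have hex : ∀ i, ∃ u : V, u ∈ LinearMap.range (F i) ∧ u ≠ 0 := by
    intro i
    have : 0 < Module.finrank 𝕜 (LinearMap.range (F i)) := by rw [hrank i]; norm_num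
    have := Module.finrank_pos_iff.mp this
    obtain ⟨⟨u, hu⟩, h0⟩ := exists_ne (0 : LinearMap.range (F i))
    exact ⟨u, hu, by simpa [Subtype.ext_iff] using h0⟩
  choose u hu hu0 using hex
  have happ : ∀ j i, F j (u i) = if j = i then u i else 0 := by
    intro i j
    obtain ⟨x, hx⟩ := hu j
    have := congrArg (fun f : Module.End 𝕜 V => f x) (hidem i j)
    simp only [Module.End.mul_apply] at this
    rw [← hx]
    split_ifs at this ⊢ with h
    · simpa [hx, h] using this
    · simpa [hx] using this
  have hLI : LinearIndependent 𝕜 u := li_of_orth F u happ hu0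
  have hcard : Fintype.card (Fin (d+1)) = Module.finrank 𝕜 V := by simp [hdim]
  let b := basisOfLinearIndependentOfCardEqFinrank hLI hcard
  have hb : ⇑b = u := coe_basisOfLinearIndependentOfCardEqFinrank hLI hcard
  apply b.ext
  intro j
  rw [hb]
  simp only [LinearMap.sum_apply, happ, Module.End.one_apply]
  rw [Finset.sum_eq_single j] <;> simp +contextual

variable (hdim : Module.finrank 𝕜 V = d + 1)
    (A : Module.End 𝕜 V)
    (Estar : Fin (d + 1) → Module.End 𝕜 V)
    (hidem : ∀ i j, Estar i * Estar j = if i = j then Estar i else 0)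
    (hrank : ∀ i, Module.finrank 𝕜 (LinearMap.range (Estar i)) = 1)
    (htri : ∀ i j : Fin (d + 1), 1 < |((i : ℕ) : ℤ) - ((j : ℕ) : ℤ)| → Estar i * A * Estar j = 0)
    (hirr : ∀ i j : Fin (d + 1), |((i : ℕ) : ℤ) - ((j : ℕ) : ℤ)| = 1 → Estar i * A * Estar j ≠ 0)

include hdim hidem hrank htri in
lemma powers_a {x w : V} (hwx : Estar 0 x = w) :
    ∀ n : ℕ, ∀ k : Fin (d+1), n < (k : ℕ) → Estar k ((A ^ n) w) = 0 := by
  have hsum := sum_idem_eq_one' hdim Estar hidem hrank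
  have expand : ∀ (k : Fin (d+1)) (y : V), Estar k (A y) = ∑ t, (Estar k * A * Estar t) y := by
    intro k y
    calc Estar k (A y) = (Estar k * A * (∑ t, Estar t)) y := by rw [hsum, mul_one]; rfl
      _ = (∑ t, Estar k * A * Estar t) y := by rw [Finset.mul_sum]
      _ = ∑ t, (Estar k * A * Estar t) y := by rw [LinearMap.sum_apply]
  intro n
  induction n with
  | zero =>
    intro k hk
    have hk0 : k ≠ 0 := by
      intro h; rw [h] at hk; simp at hk
    have := congrArg (fun f : Module.End 𝕜 V => f x) (hidem k 0)
    simp only [Module.End.mul_apply, if_neg hk0] at this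
    simpa [hwx] using this
  | succ n ih =>
    intro k hk
    rw [pow_succ', Module.End.mul_apply, expand k]
    apply Finset.sum_eq_zero
    intro t _
    by_cases ht : n < (t : ℕ)
    · simp [Module.End.mul_apply, ih t ht]
    · have h0 : Estar k * A * Estar t = 0 := by
        apply htri
        rw [lt_abs]; left; push_cast; omega
      rw [h0]; rfl

include hdim hidem hrank htri hirr in
lemma powers_b {x w : V} (hwx : Estar 0 x = w) (hw0 : w ≠ 0) :
    ∀ j : Fin (d+1), Estar j ((A ^ (j : ℕ)) w) ≠ 0 := by
  have ha := powers_a hdim A Estar hidem hrank htri hwx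
  have hsum := sum_idem_eq_one' hdim Estar hidem hrank
  have expand : ∀ (k : Fin (d+1)) (y : V), Estar k (A y) = ∑ t, (Estar k * A * Estar t) y := by
    intro k y
    calc Estar k (A y) = (Estar k * A * (∑ t, Estar t)) y := by rw [hsum, mul_one]; rfl
      _ = (∑ t, Estar k * A * Estar t) y := by rw [Finset.mul_sum]
      _ = ∑ t, (Estar k * A * Estar t) y := by rw [LinearMap.sum_apply]
  intro j
  induction j using Fin.induction with
  | zero =>
    have hE0w : Estar 0 w = w := by
      have h00 := congrArg (fun f : Module.End 𝕜 V => f x) (hidem 0 0)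
      simpa [Module.End.mul_apply, hwx] using h00
    simp only [Fin.val_zero, pow_zero, Module.End.one_apply, hE0w]
    exact hw0
  | succ i ih =>
    rw [Fin.coe_castSucc] at ih
    set y := Estar i.castSucc ((A ^ (i : ℕ)) w) with hy
    have hyr : y ∈ LinearMap.range (Estar i.castSucc) := ⟨_, rfl⟩
    rw [Fin.val_succ, pow_succ', Module.End.mul_apply, expand i.succ]
    have hred : ∑ t, (Estar i.succ * A * Estar t) ((A ^ (i : ℕ)) w)
        = (Estar i.succ * A * Estar i.castSucc) ((A ^ (i : ℕ)) w) := by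
      apply Finset.sum_eq_single
      · intro t _ htne
        rcases lt_trichotomy (t : ℕ) (i : ℕ) with h | h | h
        · have h0 : Estar i.succ * A * Estar t = 0 := by
            apply htri
            rw [lt_abs]; left
            rw [Fin.val_succ]; push_cast; omega
          rw [h0]; rfl
        · exact absurd (Fin.ext (by rw [Fin.coe_castSucc, h]) : t = i.castSucc) htne
        · simp [Module.End.mul_apply, ha (i : ℕ) t h]
      · intro h; exact absurd (Finset.mem_univ _) h
    rw [hred]
    intro hcon
    apply hirr i.succ i.castSucc
    · rw [Fin.val_succ, Fin.coe_castSucc]; push_cast; simp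
    · ext z
      obtain ⟨c, hc⟩ := rank_one_apply' (Estar i.castSucc) (hrank _) hyr ih z
      simp only [Module.End.mul_apply, LinearMap.zero_apply] at hcon ⊢
      rw [hc, map_smul, map_smul]
      have hcon' : (Estar i.succ) (A y) = 0 := hcon
      rw [hcon', smul_zero]

include hdim hidem hrank htri hirr in
lemma powers_li {x w : V} (hwx : Estar 0 x = w) (hw0 : w ≠ 0) :
    LinearIndependent 𝕜 (fun j : Fin (d+1) => (A ^ (j : ℕ)) w) := by
  have ha := powers_a hdim A Estar hidem hrank htri hwx
  have hb := powers_b hdim A Estar hidem hrank htri hirr hwx hw0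
  rw [Fintype.linearIndependent_iff]
  intro g hg
  have hstep : ∀ j : Fin (d+1), (∀ m : Fin (d+1), (j : ℕ) < (m : ℕ) → g m = 0) → g j = 0 := by
    intro j hj
    have := congrArg (Estar j) hg
    rw [map_sum, map_zero] at this
    simp only [map_smul] at this
    rw [Finset.sum_eq_single j] at this
    · exact (smul_eq_zero.mp this).resolve_right (hb j)
    · intro m _ hm
      rcases lt_or_gt_of_ne (fun h : (m : ℕ) = (j : ℕ) => hm (Fin.ext h)) with h | h
      · rw [ha (m : ℕ) j h, smul_zero]
      · rw [hj m h, zero_smul]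
    · intro h; exact absurd (Finset.mem_univ _) h
  have hall : ∀ n : ℕ, ∀ j : Fin (d+1), d - (j : ℕ) ≤ n → g j = 0 := by
    intro n
    induction n with
    | zero =>
      intro j hj
      refine hstep j (fun m hm => ?_)
      have := m.isLt
      omega
    | succ n ih =>
      intro j hj
      exact hstep j (fun m hm => ih m (by omega))
  intro j
  exact hall d j (by omega)

end aux

/-- If vertex r of Δ is adjacent to exactly one other vertex, then a*ᵣ ≠ θ*₀. -/
theorem stmt_14 {𝕜 : Type*} [Field 𝕜] {V : Type*} [AddCommGroup V] [Module 𝕜 V]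
    [FiniteDimensional 𝕜 V] {d : ℕ} (hdim : Module.finrank 𝕜 V = d + 1)
    (A : Module.End 𝕜 V)
    (Estar : Fin (d + 1) → Module.End 𝕜 V)
    (hidem : ∀ i j, Estar i * Estar j = if i = j then Estar i else 0)
    (hrank : ∀ i, Module.finrank 𝕜 (LinearMap.range (Estar i)) = 1)
    (htri : ∀ i j : Fin (d + 1), 1 < |((i : ℕ) : ℤ) - ((j : ℕ) : ℤ)| → Estar i * A * Estar j = 0)
    (hirr : ∀ i j : Fin (d + 1), |((i : ℕ) : ℤ) - ((j : ℕ) : ℤ)| = 1 → Estar i * A * Estar j ≠ 0)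
    (hd : 1 ≤ d)
    (θ : Fin (d + 1) → 𝕜) (hθ : Function.Injective θ)
    (E : Fin (d + 1) → Module.End 𝕜 V)
    (hEidem : ∀ i j, E i * E j = if i = j then E i else 0)
    (hErank : ∀ i, Module.finrank 𝕜 (LinearMap.range (E i)) = 1)
    (hA : A = ∑ i, θ i • E i)
    (θstar : Fin (d + 1) → 𝕜)
    (Astar : Module.End 𝕜 V) (hAstar : Astar = ∑ i, θstar i • Estar i)
    (r : Fin (d + 1))
    (hleaf : ∃ s : Fin (d + 1), (s ≠ r ∧ E r * Astar * E s ≠ 0) ∧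
      ∀ t : Fin (d + 1), t ≠ r → E r * Astar * E t ≠ 0 → t = s) :
    LinearMap.trace 𝕜 V (E r * Astar) ≠ θstar 0 := by
  intro htr
  obtain ⟨s, ⟨hsr, hs0⟩, huniq⟩ := hleaf
  classical
  -- a nonzero vector w in range (Estar 0)
  have hpos : 0 < Module.finrank 𝕜 (LinearMap.range (Estar 0)) := by rw [hrank 0]; norm_num
  have := Module.finrank_pos_iff.mp hpos
  obtain ⟨⟨w, hw⟩, hwne⟩ := exists_ne (0 : LinearMap.range (Estar 0))
  obtain ⟨x, hwx⟩ := hw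
  have hw0 : w ≠ 0 := by simpa [Subtype.ext_iff] using hwne
  have hEw : ∀ i : Fin (d+1), i ≠ 0 → Estar i w = 0 := by
    intro i hi
    have := congrArg (fun f : Module.End 𝕜 V => f x) (hidem i 0)
    simpa [Module.End.mul_apply, hwx, if_neg hi] using this
  have hE0w : Estar 0 w = w := by
    have h00 := congrArg (fun f : Module.End 𝕜 V => f x) (hidem 0 0)
    simpa [Module.End.mul_apply, hwx] using h00
  have hLI := powers_li hdim A Estar hidem hrank htri hirr hwx hw0
  have hsumE := sum_idem_eq_one' hdim E hEidem hErank
  -- E i ∘ A^n = θ i ^ n • E i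
  have hEA : ∀ i, E i * A = θ i • E i := by
    intro i
    rw [hA, Finset.mul_sum]
    rw [Finset.sum_eq_single i]
    · rw [mul_smul_comm, hEidem, if_pos rfl]
    · intro t _ ht
      rw [mul_smul_comm, hEidem, if_neg (Ne.symm ht), smul_zero]
    · simp
  have hEApow : ∀ (i : Fin (d+1)) (n : ℕ) (v : V), E i ((A ^ n) v) = θ i ^ n • E i v := by
    intro i n
    induction n with
    | zero => intro v; simp
    | succ n ih =>
      intro v
      rw [pow_succ', Module.End.mul_apply]
      have h1 : E i (A ((A ^ n) v)) = (E i * A) ((A ^ n) v) := rfl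
      rw [h1, hEA, LinearMap.smul_apply, ih, pow_succ']
      rw [smul_smul]
  -- E i w ≠ 0 for all i
  have hvne : ∀ i, E i w ≠ 0 := by
    intro i hzero
    have hker : ∀ j : Fin (d+1), (A ^ (j : ℕ)) w ∈ LinearMap.ker (E i) := by
      intro j
      rw [LinearMap.mem_ker, hEApow, hzero, smul_zero]
    have hLI' : LinearIndependent 𝕜
        (fun j : Fin (d+1) => (⟨(A ^ (j : ℕ)) w, hker j⟩ : LinearMap.ker (E i))) := by
      apply LinearIndependent.of_comp (LinearMap.ker (E i)).subtype
      exact hLI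
    have hcard := hLI'.fintype_card_le_finrank
    have hrk := LinearMap.finrank_range_add_finrank_ker (E i)
    rw [hErank i, hdim] at hrk
    simp only [Fintype.card_fin] at hcard
    omega
  set v : Fin (d+1) → V := fun t => E t w with hvdef
  have hvE : ∀ i t, E i (v t) = if i = t then v t else 0 := by
    intro i t
    have := congrArg (fun f : Module.End 𝕜 V => f w) (hEidem i t)
    split_ifs with h
    · simpa [hvdef, h, Module.End.mul_apply] using this
    · simpa [hvdef, if_neg h, Module.End.mul_apply] using this
  have hvLI : LinearIndependent 𝕜 v := li_of_orth E v hvE hvne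
  have hcard : Fintype.card (Fin (d+1)) = Module.finrank 𝕜 V := by simp [hdim]
  let b := basisOfLinearIndependentOfCardEqFinrank hvLI hcard
  have hbv : ⇑b = v := coe_basisOfLinearIndependentOfCardEqFinrank hvLI hcard
  -- coefficients
  have hvrr : v r ∈ LinearMap.range (E r) := ⟨w, rfl⟩
  choose c hc using fun t =>
    rank_one_apply' (E r) (hErank r) hvrr (hvne r) (Astar (v t))
  -- trace = c r
  have htrace : LinearMap.trace 𝕜 V (E r * Astar) = c r := by
    rw [LinearMap.trace_eq_matrix_trace 𝕜 b, Matrix.trace]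
    rw [Finset.sum_eq_single r]
    · simp only [Matrix.diag_apply, LinearMap.toMatrix_apply, hbv, Module.End.mul_apply]
      rw [hc r, ← hbv]
      show (b.repr (c r • b r)) r = c r
      rw [map_smul, b.repr_self]
      simp
    · intro t _ htne
      simp only [Matrix.diag_apply, LinearMap.toMatrix_apply, hbv, Module.End.mul_apply]
      rw [hc t, ← hbv]
      show (b.repr (c t • b r)) t = 0
      rw [map_smul, b.repr_self]
      rw [Finsupp.smul_single, Finsupp.single_apply, if_neg (Ne.symm htne)]
    · intro h; exact absurd (Finset.mem_univ _) h
  have hcr : E r (Astar (v r)) = θstar 0 • v r := by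
    have hcc : c r = θstar 0 := by rw [← htrace]; exact htr
    rw [hc r, hcc]
  -- Astar w = θstar 0 • w
  have hAsw : Astar w = θstar 0 • w := by
    rw [hAstar, LinearMap.sum_apply]
    rw [Finset.sum_eq_single 0]
    · rw [LinearMap.smul_apply, hE0w]
    · intro t _ ht
      rw [LinearMap.smul_apply, hEw t ht, smul_zero]
    · simp
  -- w = ∑ v t
  have hws : w = ∑ t, v t := by
    have := congrArg (fun f : Module.End 𝕜 V => f w) hsumE
    simpa [LinearMap.sum_apply, hvdef] using this.symm
  -- vanishing terms
  have hz : ∀ t : Fin (d+1), t ≠ r → t ≠ s → E r (Astar (v t)) = 0 := by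
    intro t h1 h2
    have h3 : E r * Astar * E t = 0 := by
      by_contra h
      exact h2 (huniq t h1 h)
    have := congrArg (fun f : Module.End 𝕜 V => f w) h3
    simpa [Module.End.mul_apply, hvdef] using this
  have hsum2 : E r (Astar w) = E r (Astar (v r)) + E r (Astar (v s)) := by
    conv_lhs => rw [hws]
    rw [map_sum, map_sum]
    rw [← Finset.sum_subset (Finset.subset_univ ({r, s} : Finset (Fin (d+1))))]
    · rw [Finset.sum_pair (Ne.symm hsr)]
    · intro t _ htm
      simp only [Finset.mem_insert, Finset.mem_singleton, not_or] at htm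
      exact hz t htm.1 htm.2
  have hsum1 : E r (Astar w) = θstar 0 • v r := by
    rw [hAsw, map_smul]
  have hvs0 : E r (Astar (v s)) = 0 := by
    have h2 := hsum2
    rw [hcr, hsum1] at h2
    exact left_eq_add.mp h2
  apply hs0
  ext z
  have hvsr : v s ∈ LinearMap.range (E s) := ⟨w, rfl⟩
  obtain ⟨cz, hcz⟩ := rank_one_apply' (E s) (hErank s) hvsr (hvne s) z
  simp only [Module.End.mul_apply, LinearMap.zero_apply]
  rw [hcz, map_smul, map_smul, hvs0, smul_zero]
end

section
/- Fix distinct integers r and s with 0 ≤ r,s ≤ d. Then the following are equivalent: (i) in the graph Δ, vertex r is adjacent to vertex s and to no other vertices; (ii) a*_r ≠ θ*_0 and u_i(θ_s)(θ*_0 − a*_r) = u_i(θ_r)(θ*_i − a*_r) for 0 ≤ i ≤ d. -/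
/-!
Put `w t := ∑ i, u_i(θ t) • v i`. In the basis `v` the matrix of `A` is irreducible tridiagonal, so
an eigenvector of `A` is determined by its first coordinate through the three-term recurrence that
also defines the `u_i`; hence `E t V = 𝕜 w t`, and `E t A* E r = 0` iff `E t (A* w r) = 0`.
A diagonal matrix `K` with `K M = Mᵀ K` makes `A*` (diagonal in `v`) and every `E t` (a Lagrange
polynomial in `A`) `K`-symmetric, so `E t A* E t' = 0` iff `E t' A* E t = 0`. Therefore (i) says
exactly that `A* w r = E r (A* w r) + μ • w s` with `μ ≠ 0`. For the rank-one idempotent `E r`,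
`E r A* E r = T • E r` with `T = tr (E r A*)`, and reading `A* w r = T • w r + μ • w s` in the
coordinates of `v`, where `u_0 = 1`, forces `μ = θ*_0 - T` and gives the identities of (ii).
-/

open Polynomial Module LinearMap Finset Matrix

section Idempotents

variable {𝕜 R ι : Type*} [Field 𝕜] [Ring R] [Algebra 𝕜 R] [Fintype ι] {e : ι → R}

lemma OrthogonalIdempotents.mul_sum_smul (he : OrthogonalIdempotents e) (θ : ι → 𝕜) (t : ι) :
    e t * (∑ i, θ i • e i) = θ t • e t := by
  classical
  simp [Finset.mul_sum, he.mul_eq]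

lemma CompleteOrthogonalIdempotents.pow_sum_smul (he : CompleteOrthogonalIdempotents e)
    (θ : ι → 𝕜) (n : ℕ) :
    (∑ i, θ i • e i) ^ n = ∑ i, θ i ^ n • e i := by
  induction n with
  | zero => simp [he.complete]
  | succ n ih =>
    rw [pow_succ, ih, Finset.sum_mul]
    simp only [smul_mul_assoc, he.mul_sum_smul, smul_smul, pow_succ]

lemma CompleteOrthogonalIdempotents.aeval_sum_smul (he : CompleteOrthogonalIdempotents e)
    (θ : ι → 𝕜) (p : 𝕜[X]) :
    aeval (∑ i, θ i • e i) p = ∑ i, p.eval (θ i) • e i := by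
  simp only [aeval_eq_sum_range, eval_eq_sum_range, he.pow_sum_smul, Finset.smul_sum, smul_smul,
    Finset.sum_smul]
  exact Finset.sum_comm

lemma CompleteOrthogonalIdempotents.eq_aeval_lagrange_basis [DecidableEq ι]
    (he : CompleteOrthogonalIdempotents e) {θ : ι → 𝕜} (hθ : Function.Injective θ) (t : ι) :
    e t = aeval (∑ i, θ i • e i) (Lagrange.basis univ θ t) := by
  rw [he.aeval_sum_smul, Finset.sum_eq_single t]
  · rw [Lagrange.eval_basis_self hθ.injOn (mem_univ t), one_smul]
  · intro i _ hit
    rw [Lagrange.eval_basis_of_ne (Ne.symm hit) (mem_univ i), zero_smul]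
  · simp

end Idempotents

section Matrix

variable {R n : Type*} [CommRing R] [Fintype n] [DecidableEq n] {K M : Matrix n n R}

lemma Matrix.mul_aeval_eq_transpose_mul (hKM : K * M = Mᵀ * K) (p : R[X]) :
    K * aeval M p = (aeval M p)ᵀ * K := by
  have hpow : ∀ m : ℕ, K * M ^ m = (M ^ m)ᵀ * K := fun m => by
    induction m with
    | zero => simp
    | succ m ih => rw [pow_succ, ← mul_assoc, ih, mul_assoc, hKM, ← mul_assoc, ← transpose_mul,
        ← pow_succ', pow_succ]
  induction p using Polynomial.induction_on' with
  | add p q hp hq => rw [map_add, mul_add, transpose_add, add_mul, hp, hq]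
  | monomial m r => rw [aeval_monomial, ← Algebra.smul_def, mul_smul_comm, hpow, transpose_smul,
      smul_mul_assoc]

lemma Matrix.mul_mul_eq_zero_comm (hK : IsUnit K) {X Y Z : Matrix n n R}
    (hX : K * X = Xᵀ * K) (hY : K * Y = Yᵀ * K) (hZ : K * Z = Zᵀ * K) :
    X * Y * Z = 0 ↔ Z * Y * X = 0 := by
  have hKXYZ : K * (X * Y * Z) = (Z * Y * X)ᵀ * K := by
    simp only [transpose_mul, mul_assoc]
    rw [← mul_assoc K X, hX, mul_assoc, ← mul_assoc K Y, hY, mul_assoc, hZ]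
  rw [← hK.mul_right_eq_zero, hKXYZ, hK.mul_left_eq_zero, transpose_eq_zero]

end Matrix

section Tridiagonal

variable {𝕜 : Type*} [Field 𝕜]

def Matrix.tridiagonal (a b c : ℕ → 𝕜) (n : ℕ) : Matrix (Fin n) (Fin n) 𝕜 :=
  Matrix.of fun i j =>
    if (i : ℕ) = j then a i else if (i : ℕ) + 1 = j then b i else if (j : ℕ) + 1 = i then c i else 0

namespace Matrix.tridiagonal

variable {a b c : ℕ → 𝕜} {n : ℕ}

-- At `j = 0` the term `c 0 * g (0 - 1)` is `c 0 * g 0`, which is why `c 0 = 0` is needed.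
lemma mulVec_apply (hc0 : c 0 = 0) (g : ℕ → 𝕜) {j : ℕ} (hj : j + 1 < n) :
    (tridiagonal a b c n *ᵥ fun i => g i) ⟨j, by omega⟩ =
      c j * g (j - 1) + a j * g j + b j * g (j + 1) := by
  have hsplit : ∀ m : ℕ, (if j = m then a j else if j + 1 = m then b j
      else if m + 1 = j then c j else 0) * g m =
      (if m = j - 1 then c j * g m else 0) + (if m = j then a j * g m else 0) +
        (if m = j + 1 then b j * g m else 0) := fun m => by
    rcases j with _ | j
    · split_ifs <;> first | omega | simp [hc0]
    · split_ifs <;> first | omega | simp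
  simp only [mulVec, dotProduct, tridiagonal, of_apply]
  rw [Fin.sum_univ_eq_sum_range (fun m => (if j = m then a j else if j + 1 = m then b j
      else if m + 1 = j then c j else 0) * g m) n]
  simp only [hsplit, Finset.sum_add_distrib, Finset.sum_ite_eq', Finset.mem_range]
  rw [if_pos (by omega), if_pos (by omega), if_pos hj]

lemma eq_smul_of_mulVec_eq_smul [NeZero n] (hc0 : c 0 = 0) (hb : ∀ i, i + 1 < n → b i ≠ 0)
    {θ : 𝕜} {U : ℕ → 𝕜} (hU0 : U 0 = 1)
    (hU : ∀ i, i + 1 < n → θ * U i = c i * U (i - 1) + a i * U i + b i * U (i + 1))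
    {x : Fin n → 𝕜} (hx : tridiagonal a b c n *ᵥ x = θ • x) : x = x 0 • fun i : Fin n => U i := by
  set G : ℕ → 𝕜 := fun m => if h : m < n then x ⟨m, h⟩ else 0 with hG
  have hxG : x = fun i : Fin n => G i := funext fun i => by simp [hG]
  have hrow : ∀ j, j + 1 < n → θ * G j = c j * G (j - 1) + a j * G j + b j * G (j + 1) :=
    fun j hj => by
      have := congrFun hx ⟨j, by omega⟩
      rw [hxG, mulVec_apply hc0 G hj] at this
      simpa [hG, show j < n by omega] using this.symm
  have hGU : ∀ m, m < n → G m = G 0 * U m := by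
    intro m
    induction m using Nat.strong_induction_on with
    | _ m ih =>
      rcases m with _ | m
      · simp [hU0]
      · intro hm
        have h1 := ih m (by omega) (by omega)
        have h2 := ih (m - 1) (by omega) (by omega)
        refine mul_left_cancel₀ (hb m hm) ?_
        linear_combination -hrow m hm + G 0 * hU m hm + (θ - a m) * h1 - c m * h2
  funext i
  have h := hGU i i.isLt
  simp only [hG, dif_pos i.isLt, dif_pos (NeZero.pos n), Fin.eta] at h
  rw [h, Pi.smul_apply, smul_eq_mul]
  rfl

lemma exists_diagonal_mul_eq_transpose_mul (hb : ∀ i, i + 1 < n → b i ≠ 0)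
    (hc : ∀ i, i + 1 < n → c (i + 1) ≠ 0) :
    ∃ k : Fin n → 𝕜, (∀ i, k i ≠ 0) ∧
      diagonal k * tridiagonal a b c n = (tridiagonal a b c n)ᵀ * diagonal k := by
  set k : ℕ → 𝕜 := fun m => ∏ i ∈ range m, b i / c (i + 1) with hk
  have hk0 : ∀ m, m < n → k m ≠ 0 := fun m hm => prod_ne_zero_iff.mpr fun i hi =>
    div_ne_zero (hb i (by simp at hi; omega)) (hc i (by simp at hi; omega))
  have hkb : ∀ m, m + 1 < n → k m * b m = c (m + 1) * k (m + 1) := fun m hm => by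
    simp only [hk, prod_range_succ]
    field_simp [hc m hm]
  refine ⟨fun i => k i, fun i => hk0 i i.isLt, ?_⟩
  ext i j
  simp only [diagonal_mul, mul_diagonal, transpose_apply, tridiagonal, of_apply]
  by_cases hij : (i : ℕ) = j
  · rw [if_pos hij, if_pos hij.symm, hij, mul_comm]
  have hji : ¬ (j : ℕ) = i := Ne.symm hij
  by_cases hsucc : (i : ℕ) + 1 = j
  · rw [if_neg hij, if_pos hsucc, if_neg hji, if_neg (by omega), if_pos hsucc, ← hsucc]
    exact hkb i (by omega)
  by_cases hpred : (j : ℕ) + 1 = i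
  · rw [if_neg hij, if_neg hsucc, if_pos hpred, if_neg hji, if_pos hpred, ← hpred]
    linear_combination -hkb j (by omega)
  · rw [if_neg hij, if_neg hsucc, if_neg hpred, if_neg hji, if_neg hpred, if_neg hsucc,
      mul_zero, zero_mul]

end Matrix.tridiagonal

end Tridiagonal

section Endomorphisms

variable {K V ι κ : Type*} [Field K] [AddCommGroup V] [Module K V]

lemma OrthogonalIdempotents.apply_eq_zero_of_mem_range {E : ι → Module.End K V}
    (he : OrthogonalIdempotents E) {i j : ι} (hji : j ≠ i) {x : V} (hx : x ∈ range (E i)) :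
    E j x = 0 := by
  obtain ⟨y, rfl⟩ := hx
  rw [← Module.End.mul_apply, he.ortho hji, LinearMap.zero_apply]

lemma OrthogonalIdempotents.sum_smul_apply_of_mem_range [Fintype ι] {E : ι → Module.End K V}
    (he : OrthogonalIdempotents E) (β : ι → K) {i : ι} {x : V} (hx : x ∈ range (E i)) :
    (∑ j, β j • E j) x = β i • x := by
  rw [LinearMap.sum_apply, Finset.sum_eq_single i]
  · rw [LinearMap.smul_apply, (he.idem i).mem_range_iff.mp hx]
  · intro j _ hji
    rw [LinearMap.smul_apply, he.apply_eq_zero_of_mem_range hji hx, smul_zero]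
  · simp

lemma CompleteOrthogonalIdempotents.of_card_eq_finrank [Fintype ι] [FiniteDimensional K V]
    {E : ι → Module.End K V} (he : OrthogonalIdempotents E) (hne : ∀ i, E i ≠ 0)
    (hcard : Fintype.card ι = finrank K V) : CompleteOrthogonalIdempotents E := by
  classical
  have hx : ∀ i, ∃ x ∈ range (E i), x ≠ 0 := fun i =>
    Submodule.exists_mem_ne_zero_of_ne_bot (LinearMap.range_eq_bot.not.mpr (hne i))
  choose x hxE hx0 using hx
  have hEx : ∀ i j, E j (x i) = if j = i then x i else 0 := fun i j => by
    split_ifs with hji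
    · exact hji ▸ (he.idem i).mem_range_iff.mp (hxE i)
    · exact he.apply_eq_zero_of_mem_range hji (hxE i)
  have hli : LinearIndependent K x := by
    refine Fintype.linearIndependent_iff.mpr fun g hg j => ?_
    have := congrArg (E j) hg
    simp only [map_sum, map_smul, hEx, smul_ite, smul_zero, Finset.sum_ite_eq, mem_univ,
      if_true, map_zero] at this
    exact (smul_eq_zero.mp this).resolve_right (hx0 j)
  refine ⟨he, LinearMap.ext_on_range (hli.span_eq_top_of_card_eq_finrank' hcard) fun i => ?_⟩
  simp [LinearMap.sum_apply, hEx]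

lemma LinearMap.mul_eq_zero_iff_apply_eq_zero {P Q : Module.End K V} {w : V}
    (hP : range P = Submodule.span K {w}) : Q * P = 0 ↔ Q w = 0 := by
  rw [Module.End.mul_eq_comp, ← LinearMap.range_le_ker_iff, hP,
    Submodule.span_singleton_le_iff_mem, LinearMap.mem_ker]

lemma IsIdempotentElem.mul_mul_self_eq_trace_smul [FiniteDimensional K V] {P : Module.End K V}
    (hP : IsIdempotentElem P) {w : V} (hw : range P = Submodule.span K {w}) (hw0 : w ≠ 0)
    (X : Module.End K V) : P * X * P = trace K V (P * X) • P := by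
  obtain ⟨μ, hμ⟩ : ∃ μ : K, μ • w = P (X w) :=
    Submodule.mem_span_singleton.mp (hw ▸ LinearMap.mem_range_self P (X w))
  have hPXP : P * X * P = μ • P := by
    rw [← sub_eq_zero, show P * X * P - μ • P = (P * X - μ • 1) * P by
      rw [sub_mul, smul_mul_assoc, one_mul], mul_eq_zero_iff_apply_eq_zero hw]
    simp [hμ]
  have htrP : trace K V P = 1 := by
    rw [hP.isProj_range.trace, hw, finrank_span_singleton hw0, Nat.cast_one]
  have htr : trace K V (P * X) = μ := by
    rw [← hP.eq, mul_assoc, LinearMap.trace_mul_comm, hPXP, map_smul, htrP,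
      smul_eq_mul, mul_one]
  rw [hPXP, htr]

lemma CompleteOrthogonalIdempotents.apply_ne_zero_and_eq_zero_iff [Fintype ι]
    {E : ι → Module.End K V} (hE : CompleteOrthogonalIdempotents E) {w : ι → V}
    (hw : ∀ t, range (E t) = Submodule.span K {w t}) (hw0 : ∀ t, w t ≠ 0) {r s : ι} (hrs : r ≠ s)
    (z : V) :
    (E s z ≠ 0 ∧ ∀ t, t ≠ s → t ≠ r → E t z = 0) ↔ ∃ μ ≠ (0 : K), z = E r z + μ • w s := by
  classical
  have hws : w s ∈ range (E s) := hw s ▸ Submodule.mem_span_singleton_self _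
  constructor
  · rintro ⟨hs, hrest⟩
    obtain ⟨μ, hμ⟩ := Submodule.mem_span_singleton.mp (hw s ▸ mem_range_self (E s) z)
    refine ⟨μ, fun h => hs (by rw [← hμ, h, zero_smul]), ?_⟩
    have hz : z = ∑ t, E t z := by rw [← LinearMap.sum_apply, hE.complete, Module.End.one_apply]
    conv_lhs => rw [hz]
    rw [hμ, ← Finset.sum_subset (subset_univ {r, s}) fun t _ ht => hrest t
      (fun h => ht (by simp [h])) (fun h => ht (by simp [h])), sum_pair hrs]
  · rintro ⟨μ, hμ, hz⟩
    have hEr : ∀ t, t ≠ r → E t (E r z) = 0 := fun t htr =>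
      hE.apply_eq_zero_of_mem_range htr (mem_range_self _ _)
    have hEs : E s z = μ • w s := by
      rw [hz, map_add, map_smul, hEr s hrs.symm, (hE.idem s).mem_range_iff.mp hws, zero_add]
    refine ⟨hEs ▸ smul_ne_zero hμ (hw0 s), fun t hts htr => ?_⟩
    rw [hz, map_add, map_smul, hEr t htr, hE.apply_eq_zero_of_mem_range hts hws, smul_zero,
      add_zero]

lemma LinearMap.toMatrix_eq_diagonal [Fintype κ] [DecidableEq κ] (v : Basis κ K V)
    {B : Module.End K V} {β : κ → K} (hB : ∀ i, B (v i) = β i • v i) :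
    toMatrix v v B = diagonal β := by
  ext i j
  rw [toMatrix_apply, hB, map_smul, Basis.repr_self, Finsupp.smul_apply, Finsupp.single_apply,
    diagonal_apply]
  split_ifs with h h' h' <;> simp_all

lemma Module.Basis.repr_apply_eq_mul_of_apply_eq_smul [Fintype κ] [DecidableEq κ]
    (v : Basis κ K V) {B : Module.End K V} {β : κ → K} (hB : ∀ i, B (v i) = β i • v i)
    (x : V) (i : κ) : v.repr (B x) i = β i * v.repr x i := by
  rw [← LinearMap.toMatrix_mulVec_repr v v B x, toMatrix_eq_diagonal v hB, mulVec_diagonal]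

lemma CompleteOrthogonalIdempotents.mul_mul_eq_zero_comm [Fintype ι] [DecidableEq ι]
    [Fintype κ] [DecidableEq κ] {E : ι → Module.End K V} (hE : CompleteOrthogonalIdempotents E)
    {θ : ι → K} (hθ : Function.Injective θ) (v : Basis κ K V) {k : κ → K} (hk : ∀ i, k i ≠ 0)
    (hkA : diagonal k * toMatrix v v (∑ i, θ i • E i) =
      (toMatrix v v (∑ i, θ i • E i))ᵀ * diagonal k)
    {B : Module.End K V} {β : κ → K} (hB : ∀ i, B (v i) = β i • v i) (t t' : ι) :
    E t * B * E t' = 0 ↔ E t' * B * E t = 0 := by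
  have hK : IsUnit (diagonal k) :=
    isUnit_diagonal.mpr (Pi.isUnit_iff.mpr fun i => (hk i).isUnit)
  have hEsymm : ∀ t, diagonal k * toMatrix v v (E t) = (toMatrix v v (E t))ᵀ * diagonal k :=
    fun t => by
      rw [hE.eq_aeval_lagrange_basis hθ t]
      exact aeval_algHom_apply (toMatrixAlgEquiv v) _ _ ▸ mul_aeval_eq_transpose_mul hkA _
  have hBsymm : diagonal k * toMatrix v v B = (toMatrix v v B)ᵀ * diagonal k := by
    rw [toMatrix_eq_diagonal v hB, diagonal_transpose, diagonal_mul_diagonal,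
      diagonal_mul_diagonal]
    simp only [mul_comm]
  rw [← (toMatrix v v).map_eq_zero_iff, ← (toMatrix v v).map_eq_zero_iff, toMatrix_mul,
    toMatrix_mul, toMatrix_mul, toMatrix_mul]
  exact Matrix.mul_mul_eq_zero_comm hK (hEsymm t) hBsymm (hEsymm t')

lemma Submodule.eq_span_of_le_eigenspace_tridiagonal {a b c : ℕ → K} {n : ℕ} [NeZero n]
    (v : Basis (Fin n) K V) {A : Module.End K V} (hA : toMatrix v v A = tridiagonal a b c n)
    (hc0 : c 0 = 0) (hb : ∀ i, i + 1 < n → b i ≠ 0) {θ : K} {U : ℕ → K} (hU0 : U 0 = 1)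
    (hU : ∀ i, i + 1 < n → θ * U i = c i * U (i - 1) + a i * U i + b i * U (i + 1))
    {S : Submodule K V} (hS : S ≠ ⊥) (hAS : S ≤ A.eigenspace θ) :
    S = Submodule.span K {v.equivFun.symm fun i => U i} := by
  set w := v.equivFun.symm fun i => U i
  have hmul : ∀ x ∈ S, x = v.repr x 0 • w := fun x hx => by
    apply v.equivFun.injective
    rw [map_smul, LinearEquiv.apply_symm_apply, Basis.equivFun_apply]
    refine tridiagonal.eq_smul_of_mulVec_eq_smul hc0 hb hU0 hU ?_
    rw [← hA, toMatrix_mulVec_repr, Module.End.mem_eigenspace_iff.mp (hAS hx), map_smul]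
    rfl
  obtain ⟨y, hyS, hy0⟩ := Submodule.exists_mem_ne_zero_of_ne_bot hS
  have hy00 : v.repr y 0 ≠ 0 := fun h => hy0 (by rw [hmul y hyS, h, zero_smul])
  have hwy : w = (v.repr y 0)⁻¹ • y := by
    rw [congrArg ((v.repr y 0)⁻¹ • ·) (hmul y hyS), smul_smul, inv_mul_cancel₀ hy00, one_smul]
  refine le_antisymm (fun x hx => mem_span_singleton.mpr ⟨_, (hmul x hx).symm⟩) ?_
  rw [span_singleton_le_iff_mem, hwy]
  exact S.smul_mem _ hyS

end Endomorphisms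

lemma exists_ne_zero_forall_eq_iff {K : Type*} [Field K] {T : K} {x y β : ℕ → K}
    (hx0 : x 0 = 1) (hy0 : y 0 = 1) (n : ℕ) :
    (∃ μ ≠ 0, ∀ i ≤ n, β i * x i = T * x i + μ * y i) ↔
      T ≠ β 0 ∧ ∀ i ≤ n, y i * (β 0 - T) = x i * (β i - T) := by
  constructor
  · rintro ⟨μ, hμ, h⟩
    have hμβ : μ = β 0 - T := by
      linear_combination -h 0 (Nat.zero_le n) + (β 0 - T) * hx0 - μ * hy0
    exact ⟨fun hT => hμ (by rw [hμβ, hT, sub_self]),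
      fun i hi => by linear_combination -h i hi - y i * hμβ⟩
  · rintro ⟨hT, h⟩
    exact ⟨β 0 - T, sub_ne_zero.mpr (Ne.symm hT), fun i hi => by linear_combination -h i hi⟩

lemma Module.Basis.apply_eq_smul_add_smul_iff {K V : Type*} [Field K] [AddCommGroup V]
    [Module K V] {n : ℕ} (v : Basis (Fin (n + 1)) K V) {B : Module.End K V} {β : ℕ → K}
    (hB : ∀ i : Fin (n + 1), B (v i) = β i • v i) (x y : ℕ → K) (T μ : K) :
    B (v.equivFun.symm fun i => x i) =
        T • v.equivFun.symm (fun i => x i) + μ • v.equivFun.symm (fun i => y i) ↔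
      ∀ i ≤ n, β i * x i = T * x i + μ * y i := by
  have hBz : ∀ z i, v.equivFun (B z) i = β i * v.equivFun z i := fun z i => by
    simp only [Basis.equivFun_apply, v.repr_apply_eq_mul_of_apply_eq_smul hB]
  rw [← v.equivFun.injective.eq_iff, funext_iff, Fin.forall_iff]
  simp only [hBz, map_add, map_smul, LinearEquiv.apply_symm_apply, Pi.add_apply, Pi.smul_apply,
    smul_eq_mul, Nat.lt_succ_iff]

theorem stmt_16_general {𝕜 : Type*} [Field 𝕜] {V : Type*} [AddCommGroup V] [Module 𝕜 V]
    [FiniteDimensional 𝕜 V] {d : ℕ} (hdim : Module.finrank 𝕜 V = d + 1)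
    (A : Module.End 𝕜 V)
    (Estar : Fin (d + 1) → Module.End 𝕜 V)
    (hidem : ∀ i j, Estar i * Estar j = if i = j then Estar i else 0)
    (θ : Fin (d + 1) → 𝕜) (hθ : Function.Injective θ)
    (E : Fin (d + 1) → Module.End 𝕜 V)
    (hEidem : ∀ i j, E i * E j = if i = j then E i else 0)
    (hErank : ∀ i, Module.finrank 𝕜 (LinearMap.range (E i)) = 1)
    (hA : A = ∑ i, θ i • E i)
    (θstar : ℕ → 𝕜)
    (Astar : Module.End 𝕜 V) (hAstar : Astar = ∑ i : Fin (d + 1), θstar (i : ℕ) • Estar i)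
    (v : Module.Basis (Fin (d + 1)) 𝕜 V) (hfeas : ∀ i, v i ∈ LinearMap.range (Estar i))
    (a b c : ℕ → 𝕜)
    (hM : ∀ i j : Fin (d + 1), LinearMap.toMatrix v v A i j =
      if (i : ℕ) = (j : ℕ) then a i
      else if (i : ℕ) + 1 = (j : ℕ) then b i
      else if (j : ℕ) + 1 = (i : ℕ) then c i else 0)
    (hb : ∀ i, i < d → b i ≠ 0)
    (hc : ∀ i, 0 < i → i ≤ d → c i ≠ 0) (hc0 : c 0 = 0)
    (u : ℕ → Polynomial 𝕜) (hu0 : u 0 = 1)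
    (hu : ∀ i, i < d → Polynomial.X * u i =
      Polynomial.C (c i) * u (i - 1) + Polynomial.C (a i) * u i + Polynomial.C (b i) * u (i + 1))
    (r s : Fin (d + 1)) (hrs : r ≠ s) :
    ((E r * Astar * E s ≠ 0) ∧
        (∀ t : Fin (d + 1), t ≠ s → t ≠ r → E r * Astar * E t = 0))
      ↔
      (LinearMap.trace 𝕜 V (E r * Astar) ≠ θstar 0 ∧
        ∀ i ≤ d,
          (u i).eval (θ s) * (θstar 0 - LinearMap.trace 𝕜 V (E r * Astar))
            = (u i).eval (θ r) * (θstar i - LinearMap.trace 𝕜 V (E r * Astar))) := by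
  classical
  set U : Fin (d + 1) → ℕ → 𝕜 := fun t i => (u i).eval (θ t)
  set w : Fin (d + 1) → V := fun t => v.equivFun.symm fun i => U t i
  have hEo : OrthogonalIdempotents E := OrthogonalIdempotents.iff_mul_eq.mpr hEidem
  have hEne : ∀ t, range (E t) ≠ ⊥ := fun t h => by
    have := hErank t
    rw [h, finrank_bot] at this
    exact zero_ne_one this
  have hE : CompleteOrthogonalIdempotents E := .of_card_eq_finrank hEo
    (fun t h => hEne t (by rw [h, LinearMap.range_zero])) (by simp [hdim])
  have hAstar_v : ∀ i, Astar (v i) = θstar i • v i := fun i => hAstar ▸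
    (OrthogonalIdempotents.iff_mul_eq.mpr hidem).sum_smul_apply_of_mem_range _ (hfeas i)
  have hAtri : toMatrix v v A = tridiagonal a b c (d + 1) := Matrix.ext hM
  have hU : ∀ t i, i + 1 < d + 1 →
      θ t * U t i = c i * U t (i - 1) + a i * U t i + b i * U t (i + 1) := fun t i hi => by
    simpa [U] using congrArg (eval (θ t)) (hu i (by omega))
  have hw : ∀ t, range (E t) = Submodule.span 𝕜 {w t} := fun t =>
    Submodule.eq_span_of_le_eigenspace_tridiagonal v hAtri hc0 (fun i hi => hb i (by omega))
      (by simp [U, hu0]) (hU t) (hEne t) fun x hx =>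
        Module.End.mem_eigenspace_iff.mpr (hA ▸ hEo.sum_smul_apply_of_mem_range θ hx)
  have hw0 : ∀ t, w t ≠ 0 := fun t h => hEne t (by rw [hw t, h, Submodule.span_zero_singleton])
  obtain ⟨k, hk, hkA⟩ := tridiagonal.exists_diagonal_mul_eq_transpose_mul (a := a) (n := d + 1)
    (fun i hi => hb i (by omega)) (fun i hi => hc (i + 1) (by omega) (by omega))
  have hsymm := hE.mul_mul_eq_zero_comm hθ v hk (hA ▸ hAtri ▸ hkA) hAstar_v
  have hErz : E r (Astar (w r)) = trace 𝕜 V (E r * Astar) • w r := by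
    have := congrArg (· (w r)) ((hE.idem r).mul_mul_self_eq_trace_smul (hw r) (hw0 r) Astar)
    simpa [(hE.idem r).mem_range_iff.mp (hw r ▸ Submodule.mem_span_singleton_self _)] using this
  simp only [ne_eq, hsymm r, mul_eq_zero_iff_apply_eq_zero (hw r), Module.End.mul_apply]
  rw [hE.apply_ne_zero_and_eq_zero_iff hw hw0 hrs, hErz]
  simp only [w, v.apply_eq_smul_add_smul_iff hAstar_v]
  exact exists_ne_zero_forall_eq_iff (by simp [U, hu0]) (by simp [U, hu0]) d

/-- Vertex r is adjacent to s and no other vertex iff a*ᵣ ≠ θ*₀ and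
uᵢ(θₛ)(θ*₀ − a*ᵣ) = uᵢ(θᵣ)(θ*ᵢ − a*ᵣ) for 0 ≤ i ≤ d. -/
theorem stmt_16 {𝕜 : Type*} [Field 𝕜] {V : Type*} [AddCommGroup V] [Module 𝕜 V]
    [FiniteDimensional 𝕜 V] {d : ℕ} (hdim : Module.finrank 𝕜 V = d + 1)
    (A : Module.End 𝕜 V)
    (Estar : Fin (d + 1) → Module.End 𝕜 V)
    (hidem : ∀ i j, Estar i * Estar j = if i = j then Estar i else 0)
    (hrank : ∀ i, Module.finrank 𝕜 (LinearMap.range (Estar i)) = 1)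
    (htri : ∀ i j : Fin (d + 1), 1 < |((i : ℕ) : ℤ) - ((j : ℕ) : ℤ)| → Estar i * A * Estar j = 0)
    (hirr : ∀ i j : Fin (d + 1), |((i : ℕ) : ℤ) - ((j : ℕ) : ℤ)| = 1 → Estar i * A * Estar j ≠ 0)
    (hd : 1 ≤ d)
    (θ : Fin (d + 1) → 𝕜) (hθ : Function.Injective θ)
    (E : Fin (d + 1) → Module.End 𝕜 V)
    (hEidem : ∀ i j, E i * E j = if i = j then E i else 0)
    (hErank : ∀ i, Module.finrank 𝕜 (LinearMap.range (E i)) = 1)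
    (hA : A = ∑ i, θ i • E i)
    (θstar : ℕ → 𝕜)
    (Astar : Module.End 𝕜 V) (hAstar : Astar = ∑ i : Fin (d + 1), θstar (i : ℕ) • Estar i)
    (v : Module.Basis (Fin (d + 1)) 𝕜 V) (hfeas : ∀ i, v i ∈ LinearMap.range (Estar i))
    (a b c : ℕ → 𝕜)
    (hM : ∀ i j : Fin (d + 1), LinearMap.toMatrix v v A i j =
      if (i : ℕ) = (j : ℕ) then a i
      else if (i : ℕ) + 1 = (j : ℕ) then b i
      else if (j : ℕ) + 1 = (i : ℕ) then c i else 0)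
    (ha : ∀ i : Fin (d + 1), a i = LinearMap.trace 𝕜 V (Estar i * A))
    (hb : ∀ i, i < d → b i ≠ 0) (hbd : b d = 0)
    (hc : ∀ i, 0 < i → i ≤ d → c i ≠ 0) (hc0 : c 0 = 0)
    (u : ℕ → Polynomial 𝕜) (hu0 : u 0 = 1)
    (hu : ∀ i, i < d → Polynomial.X * u i =
      Polynomial.C (c i) * u (i - 1) + Polynomial.C (a i) * u i + Polynomial.C (b i) * u (i + 1))
    (hud : Polynomial.X * u d =
      Polynomial.C (c d) * u (d - 1) + Polynomial.C (a d) * u d +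
        Polynomial.C (∏ h ∈ Finset.range d, b h)⁻¹ * u (d + 1))
    (r s : Fin (d + 1)) (hrs : r ≠ s) :
    ((E r * Astar * E s ≠ 0) ∧
        (∀ t : Fin (d + 1), t ≠ s → t ≠ r → E r * Astar * E t = 0))
      ↔
      (LinearMap.trace 𝕜 V (E r * Astar) ≠ θstar 0 ∧
        ∀ i ≤ d,
          (u i).eval (θ s) * (θstar 0 - LinearMap.trace 𝕜 V (E r * Astar))
            = (u i).eval (θ r) * (θstar i - LinearMap.trace 𝕜 V (E r * Astar))) :=
  stmt_16_general hdim A Estar hidem θ hθ E hEidem hErank hA θstar Astar hAstar v hfeas a b c hM hb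
    hc hc0 u hu0 hu r s hrs
end

section
/- Let θ ∈ 𝕜. Then the following are equivalent: (i) the tridiagonal matrix representing A with respect to the fixed feasible basis has constant row sum θ, i.e., c_i + a_i + b_i = θ for 0 ≤ i ≤ d (with the conventions c_0 = 0 and b_d = 0); (ii) θ is an eigenvalue of A and u_i(θ) = 1 for 0 ≤ i ≤ d. -/
/-!
With respect to the feasible basis `A` is the tridiagonal matrix `M` with entries `a i`, `b i`,
`c i`. Both the values `u i (θ)` and the coordinates of a `θ`-eigenvector of `M` solve the
three-term recurrence `θ e i = c i e (i - 1) + a i e i + b i e (i + 1)` of the rows `i < d`, and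
since every `b i ≠ 0` such a solution is constant once these rows sum to `θ`. So constant row
sums make the all-ones vector an eigenvector and force `u i (θ) = 1`; conversely `u i (θ) = 1`
gives the row sums for `i < d`, a `θ`-eigenvector is then constant, and its last row yields
`c d + a d = θ`.
-/

open Matrix

section Tridiagonal

variable {R : Type*} [CommRing R] (a b c : ℕ → R)

def tridiagonalMatrix (n : ℕ) : Matrix (Fin (n + 1)) (Fin (n + 1)) R :=
  Matrix.of fun i j =>
    if (i : ℕ) = (j : ℕ) then a i
    else if (i : ℕ) + 1 = (j : ℕ) then b i
    else if (j : ℕ) + 1 = (i : ℕ) then c i else 0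

def extendByZero {n : ℕ} (ξ : Fin n → R) (k : ℕ) : R :=
  if h : k < n then ξ ⟨k, h⟩ else 0

@[simp]
theorem extendByZero_val {n : ℕ} (ξ : Fin n → R) (i : Fin n) : extendByZero ξ i = ξ i := by
  simp [extendByZero]

theorem extendByZero_of_le {n : ℕ} (ξ : Fin n → R) {k : ℕ} (hk : n ≤ k) : extendByZero ξ k = 0 := by
  simp [extendByZero, hk.not_gt]

def SatisfiesRecurrence (θ : R) (n : ℕ) (e : ℕ → R) : Prop :=
  ∀ i < n, θ * e i = c i * e (i - 1) + a i * e i + b i * e (i + 1)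

variable {a b c} {θ : R} {n : ℕ} {e : ℕ → R}

theorem SatisfiesRecurrence.mono {m : ℕ} (he : SatisfiesRecurrence a b c θ m e) (hnm : n ≤ m) :
    SatisfiesRecurrence a b c θ n e :=
  fun i hi => he i (hi.trans_le hnm)

theorem SatisfiesRecurrence.apply_eq_apply_zero [IsDomain R] (he : SatisfiesRecurrence a b c θ n e)
    (hb : ∀ i < n, b i ≠ 0) (hrow : ∀ i < n, c i + a i + b i = θ) : ∀ i ≤ n, e i = e 0 := by
  intro i
  induction i using Nat.strong_induction_on with
  | _ i ih =>
    intro hi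
    match i, hi with
    | 0, _ => rfl
    | m + 1, hi =>
      have h := he m (by omega)
      rw [ih m (by omega) (by omega), ih (m - 1) (by omega) (by omega)] at h
      exact mul_left_cancel₀ (hb m (by omega))
        (by linear_combination -h - e 0 * hrow m (by omega))

theorem SatisfiesRecurrence.rowSum_eq (he : SatisfiesRecurrence a b c θ n e)
    (h1 : ∀ i ≤ n, e i = 1) : ∀ i < n, c i + a i + b i = θ := by
  intro i hi
  have h := he i hi
  rw [h1 i hi.le, h1 (i - 1) (by omega), h1 (i + 1) hi] at h
  linear_combination -h

-- `c 0 = 0` makes the truncated index `0 - 1 = 0` harmless.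
theorem tridiagonalMatrix_mulVec_apply (hc0 : c 0 = 0) (ξ : Fin (n + 1) → R) (i : Fin (n + 1)) :
    (tridiagonalMatrix a b c n *ᵥ ξ) i =
      c i * extendByZero ξ (i - 1) + a i * ξ i + b i * extendByZero ξ (i + 1) := by
  have hsummand : ∀ k, (if (i : ℕ) = k then a i else if (i : ℕ) + 1 = k then b i
      else if k + 1 = (i : ℕ) then c i else 0) * extendByZero ξ k =
      ((if k = i then a i * extendByZero ξ i else 0) +
        if k = i + 1 then b i * extendByZero ξ (i + 1) else 0) +
        if k = i - 1 then c i * extendByZero ξ (i - 1) else 0 := by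
    intro k
    split_ifs <;> grind
  simp only [mulVec, dotProduct, tridiagonalMatrix, of_apply, ← extendByZero_val ξ, hsummand,
    Finset.sum_add_distrib]
  rw [Fin.sum_univ_eq_sum_range (fun k => if k = _ then _ else 0),
    Fin.sum_univ_eq_sum_range (fun k => if k = _ then _ else 0),
    Fin.sum_univ_eq_sum_range (fun k => if k = _ then _ else 0)]
  simp only [Finset.sum_ite_eq', Finset.mem_range]
  rw [if_pos i.isLt, if_pos (show (i : ℕ) - 1 < n + 1 by omega)]
  split_ifs with h
  · ring
  · rw [extendByZero_of_le ξ (not_lt.mp h)]; ring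

theorem tridiagonalMatrix_mulVec_one (hc0 : c 0 = 0) (hbn : b n = 0) (i : Fin (n + 1)) :
    (tridiagonalMatrix a b c n *ᵥ 1) i = c i + a i + b i := by
  have hprev : extendByZero (1 : Fin (n + 1) → R) (i - 1) = 1 := by
    simp [extendByZero, show (i : ℕ) - 1 < n + 1 by omega]
  rw [tridiagonalMatrix_mulVec_apply hc0, hprev]
  rcases Nat.lt_or_ge (i : ℕ) n with hi | hi
  · have hnext : extendByZero (1 : Fin (n + 1) → R) (i + 1) = 1 := by
      simp [extendByZero, hi]
    simp [hnext]
  · have hin : (i : ℕ) = n := by omega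
    simp [hin, hbn]

theorem satisfiesRecurrence_extendByZero (hc0 : c 0 = 0) {ξ : Fin (n + 1) → R}
    (hξ : tridiagonalMatrix a b c n *ᵥ ξ = θ • ξ) :
    SatisfiesRecurrence a b c θ (n + 1) (extendByZero ξ) := by
  intro i hi
  have h := congrFun hξ ⟨i, hi⟩
  rw [tridiagonalMatrix_mulVec_apply hc0] at h
  simpa [extendByZero, hi] using h.symm

theorem rowSum_last_of_mulVec_eq_smul [IsDomain R] (hc0 : c 0 = 0) (hb : ∀ i < n, b i ≠ 0)
    (hbn : b n = 0) (hrow : ∀ i < n, c i + a i + b i = θ) {ξ : Fin (n + 1) → R} (hξ0 : ξ ≠ 0)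
    (hξ : tridiagonalMatrix a b c n *ᵥ ξ = θ • ξ) : c n + a n + b n = θ := by
  have hrec := satisfiesRecurrence_extendByZero hc0 hξ
  have hconst := (hrec.mono n.le_succ).apply_eq_apply_zero hb hrow
  have he0 : extendByZero ξ 0 ≠ 0 := by
    refine fun h0 => hξ0 (funext fun j => ?_)
    rw [← extendByZero_val ξ j, hconst j (Nat.lt_succ_iff.mp j.isLt), h0, Pi.zero_apply]
  have hlast := hrec n n.lt_succ_self
  rw [hconst n le_rfl, hconst (n - 1) (by omega), hbn] at hlast
  rw [hbn, add_zero]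
  exact mul_right_cancel₀ he0 (by linear_combination -hlast)

end Tridiagonal

theorem Module.End.hasEigenvalue_iff_exists_toMatrix_mulVec {R V ι : Type*} [CommRing R]
    [AddCommGroup V] [Module R V] [Fintype ι] [DecidableEq ι] (v : Module.Basis ι R V)
    (A : Module.End R V) (θ : R) :
    A.HasEigenvalue θ ↔ ∃ ξ ≠ 0, LinearMap.toMatrix v v A *ᵥ ξ = θ • ξ := by
  rw [Module.End.hasEigenvalue_iff, Submodule.ne_bot_iff]
  constructor
  · rintro ⟨x, hx, hx0⟩
    refine ⟨v.repr x, by simpa using hx0, ?_⟩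
    rw [LinearMap.toMatrix_mulVec_repr, Module.End.mem_eigenspace_iff.mp hx, map_smul]
    rfl
  · rintro ⟨ξ, hξ0, hξ⟩
    set x := v.equivFun.symm ξ
    have hx : ⇑(v.repr x) = ξ := v.equivFun.apply_symm_apply ξ
    refine ⟨x, Module.End.mem_eigenspace_iff.mpr (v.equivFun.injective ?_), fun h => hξ0 ?_⟩
    · simp only [map_smul, Basis.equivFun_apply, hx]
      rw [← LinearMap.toMatrix_mulVec_repr v v, hx, hξ]
    · rw [← hx, h, map_zero, Finsupp.coe_zero]

theorem stmt_17_general {𝕜 : Type*} [Field 𝕜] {V : Type*} [AddCommGroup V] [Module 𝕜 V] {d : ℕ}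
    (A : Module.End 𝕜 V) (v : Module.Basis (Fin (d + 1)) 𝕜 V) (a b c : ℕ → 𝕜)
    (hM : ∀ i j : Fin (d + 1), LinearMap.toMatrix v v A i j =
      if (i : ℕ) = (j : ℕ) then a i
      else if (i : ℕ) + 1 = (j : ℕ) then b i
      else if (j : ℕ) + 1 = (i : ℕ) then c i else 0)
    (hb : ∀ i, i < d → b i ≠ 0) (hbd : b d = 0) (hc0 : c 0 = 0)
    (u : ℕ → Polynomial 𝕜) (hu0 : u 0 = 1)
    (hu : ∀ i, i < d → Polynomial.X * u i =
      Polynomial.C (c i) * u (i - 1) + Polynomial.C (a i) * u i + Polynomial.C (b i) * u (i + 1))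
    (θv : 𝕜) :
    (∀ i ≤ d, c i + a i + b i = θv)
      ↔ (Module.End.HasEigenvalue A θv ∧ ∀ i ≤ d, (u i).eval θv = 1) := by
  have hA : LinearMap.toMatrix v v A = tridiagonalMatrix a b c d := Matrix.ext hM
  have hrec : SatisfiesRecurrence a b c θv d fun i => (u i).eval θv := fun i hi => by
    simpa using congrArg (Polynomial.eval θv) (hu i hi)
  rw [Module.End.hasEigenvalue_iff_exists_toMatrix_mulVec v, hA]
  constructor
  · intro hrow
    refine ⟨⟨1, one_ne_zero, funext fun i => ?_⟩, fun i hi => ?_⟩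
    · rw [tridiagonalMatrix_mulVec_one hc0 hbd, hrow i (Nat.lt_succ_iff.mp i.isLt)]
      simp
    · simpa [hu0] using hrec.apply_eq_apply_zero hb (fun i hi => hrow i hi.le) i hi
  · rintro ⟨⟨ξ, hξ0, hξ⟩, hu1⟩
    have hrow := hrec.rowSum_eq hu1
    intro i hi
    rcases hi.lt_or_eq with hi | rfl
    exacts [hrow i hi, rowSum_last_of_mulVec_eq_smul hc0 hb hbd hrow hξ0 hξ]

/-- The matrix representing A has constant row sum θ iff θ is an eigenvalue of A and
uᵢ(θ) = 1 for 0 ≤ i ≤ d. -/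
theorem stmt_17 {𝕜 : Type*} [Field 𝕜] {V : Type*} [AddCommGroup V] [Module 𝕜 V]
    [FiniteDimensional 𝕜 V] {d : ℕ} (hdim : Module.finrank 𝕜 V = d + 1)
    (A : Module.End 𝕜 V)
    (Estar : Fin (d + 1) → Module.End 𝕜 V)
    (hidem : ∀ i j, Estar i * Estar j = if i = j then Estar i else 0)
    (hrank : ∀ i, Module.finrank 𝕜 (LinearMap.range (Estar i)) = 1)
    (htri : ∀ i j : Fin (d + 1), 1 < |((i : ℕ) : ℤ) - ((j : ℕ) : ℤ)| → Estar i * A * Estar j = 0)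
    (hirr : ∀ i j : Fin (d + 1), |((i : ℕ) : ℤ) - ((j : ℕ) : ℤ)| = 1 → Estar i * A * Estar j ≠ 0)
    (hd : 1 ≤ d)
    (θ : Fin (d + 1) → 𝕜) (hθ : Function.Injective θ)
    (E : Fin (d + 1) → Module.End 𝕜 V)
    (hEidem : ∀ i j, E i * E j = if i = j then E i else 0)
    (hErank : ∀ i, Module.finrank 𝕜 (LinearMap.range (E i)) = 1)
    (hA : A = ∑ i, θ i • E i)
    (v : Module.Basis (Fin (d + 1)) 𝕜 V) (hfeas : ∀ i, v i ∈ LinearMap.range (Estar i))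
    (a b c : ℕ → 𝕜)
    (hM : ∀ i j : Fin (d + 1), LinearMap.toMatrix v v A i j =
      if (i : ℕ) = (j : ℕ) then a i
      else if (i : ℕ) + 1 = (j : ℕ) then b i
      else if (j : ℕ) + 1 = (i : ℕ) then c i else 0)
    (ha : ∀ i : Fin (d + 1), a i = LinearMap.trace 𝕜 V (Estar i * A))
    (hb : ∀ i, i < d → b i ≠ 0) (hbd : b d = 0)
    (hc : ∀ i, 0 < i → i ≤ d → c i ≠ 0) (hc0 : c 0 = 0)
    (u : ℕ → Polynomial 𝕜) (hu0 : u 0 = 1)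
    (hu : ∀ i, i < d → Polynomial.X * u i =
      Polynomial.C (c i) * u (i - 1) + Polynomial.C (a i) * u i + Polynomial.C (b i) * u (i + 1))
    (hud : Polynomial.X * u d =
      Polynomial.C (c d) * u (d - 1) + Polynomial.C (a d) * u d +
        Polynomial.C (∏ h ∈ Finset.range d, b h)⁻¹ * u (d + 1))
    (θv : 𝕜) :
    (∀ i ≤ d, c i + a i + b i = θv)
      ↔ (Module.End.HasEigenvalue A θv ∧ ∀ i ≤ d, (u i).eval θv = 1) :=
  stmt_17_general A v a b c hM hb hbd hc0 u hu0 hu θv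
end
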